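/- arXiv:2103.11992 — 7 statements merged into one kernel-verified Lean document; each statement's English description precedes it below -/
import Mathlib

section
/- Let F be a countable family of countable (infinite) simple graphs. Then the Factorization Problem FP(F, R) for the Rado graph R has a solution if and only if every graph in F has infinite domination number (equivalently, no graph in F has a finite dominating set). -/
/-!
A copy of `F n` in a factorization of `R` is a spanning subgraph, so a finite dominating set of
`F n` would give one of `R`; but for every finite `B ⊆ ℕ`, `2 ^ N` with `N` large is outside `B`
and adjacent to no vertex of `B`.

Conversely, the factorization is built by a back-and-forth argument over finite partial
embeddings of all the `F n` at once whose edge images are pairwise disjoint. A vertex `x` of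
`F n` is added by mapping it to a fresh vertex of `R` adjacent to the images of the already placed
neighbours of `x` (extension property of `R`). A vertex `a` of `R` is added to the image of the
`n`-th copy by choosing a vertex of `F n` adjacent to none of the finitely many placed vertices,
which exists as these do not dominate `F n`; it creates no new edges. An edge of `R` not yet
covered is covered by an edge of a copy not used so far. A generic ideal (Rasiowa–Sikorski) meets
all these countably many cofinal sets of partial embeddings, and its union is the factorization.
-/

/-- The Rado graph on `ℕ`: for `i < j`, `i` and `j` are adjacent iff the `i`-th bit
of the binary representation of `j` is `1`. -/
def Rado : SimpleGraph ℕ :=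
  SimpleGraph.fromRel (fun i j => i < j ∧ Nat.testBit j i)

/-- A set `D` of vertices is dominating if every vertex not in `D` is adjacent to
some vertex of `D`. -/
def IsDominatingSet {V : Type*} (F : SimpleGraph V) (D : Set V) : Prop :=
  ∀ v ∉ D, ∃ d ∈ D, F.Adj v d

/-- An indexed family `G` of graphs is a factorization of `Λ`: each `G a` is a
(spanning) subgraph of `Λ` and the edge sets of the `G a` partition the edge set
of `Λ`. -/
def IsFactorization {A V : Type*} (Λ : SimpleGraph V) (G : A → SimpleGraph V) : Prop :=
  (∀ a, G a ≤ Λ) ∧ ∀ e ∈ Λ.edgeSet, ∃! a, e ∈ (G a).edgeSet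

theorem Nat.testBit_sum_two_pow (s : Finset ℕ) (i : ℕ) :
    (∑ j ∈ s, 2 ^ j).testBit i = true ↔ i ∈ s := by
  rw [← Nat.mem_bitIndices, ← List.mem_toFinset, Finset.toFinset_bitIndices_sum_two_pow]

theorem rado_adj_iff_testBit {a w : ℕ} (h : a < w) : Rado.Adj w a ↔ w.testBit a = true := by
  simp only [Rado, SimpleGraph.fromRel_adj]
  constructor
  · rintro ⟨-, ⟨h', -⟩ | ⟨-, hbit⟩⟩
    · omega
    · exact hbit
  · exact fun hbit => ⟨h.ne', Or.inr ⟨h, hbit⟩⟩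

theorem rado_extension {A B : Set ℕ} (hA : A.Finite) (hB : B.Finite) (hAB : Disjoint A B) :
    ∃ w ∉ A ∪ B, (∀ a ∈ A, Rado.Adj w a) ∧ ∀ b ∈ B, ¬Rado.Adj w b := by
  obtain ⟨N, hN⟩ := (hA.union hB).bddAbove
  set S := insert (N + 1) hA.toFinset
  have hlt : ∀ c ∈ A ∪ B, c < ∑ i ∈ S, 2 ^ i := fun c hc =>
    (Nat.lt_succ_of_le (hN hc)).trans <|
      Finset.lt_geomSum_of_mem le_rfl (Finset.mem_insert_self _ _)
  refine ⟨∑ i ∈ S, 2 ^ i, fun hw => lt_irrefl _ (hlt _ hw), fun a ha => ?_, fun b hb => ?_⟩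
  · rw [rado_adj_iff_testBit (hlt a (Or.inl ha)), Nat.testBit_sum_two_pow]
    exact Finset.mem_insert_of_mem (hA.mem_toFinset.2 ha)
  · rw [rado_adj_iff_testBit (hlt b (Or.inr hb)), Nat.testBit_sum_two_pow, Finset.mem_insert,
      hA.mem_toFinset]
    rintro (rfl | hbA)
    · exact Nat.not_succ_le_self N (hN (Or.inr hb))
    · exact hAB.notMem_of_mem_left hbA hb

theorem rado_exists_adj_forall {A B : Set ℕ} (hA : A.Finite) (hB : B.Finite) :
    ∃ w ∉ B, ∀ a ∈ A, Rado.Adj w a := by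
  obtain ⟨w, hw, hadj, -⟩ := rado_extension hA hB.sdiff Set.disjoint_sdiff_right
  exact ⟨w, fun hwB => hw (by rw [Set.union_sdiff_self]; exact Or.inr hwB), hadj⟩

theorem rado_not_isDominatingSet {D : Set ℕ} (hD : D.Finite) : ¬IsDominatingSet Rado D := by
  intro hdom
  obtain ⟨w, hw, -, hnadj⟩ := rado_extension Set.finite_empty hD (Set.empty_disjoint D)
  obtain ⟨d, hd, hadj⟩ := hdom w fun h => hw (Or.inr h)
  exact hnadj d hd hadj

theorem IsDominatingSet.mono {V : Type*} {G H : SimpleGraph V} {D : Set V} (hGH : G ≤ H)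
    (hD : IsDominatingSet G D) : IsDominatingSet H D :=
  fun v hv => (hD v hv).imp fun _ => And.imp_right fun h => hGH h

theorem IsDominatingSet.image_iso {V V' : Type*} {G : SimpleGraph V} {G' : SimpleGraph V'}
    {D : Set V} (φ : G ≃g G') (hD : IsDominatingSet G D) : IsDominatingSet G' (φ '' D) := by
  intro w hw
  obtain ⟨d, hd, hadj⟩ := hD (φ.symm w) fun h => hw ⟨_, h, φ.apply_symm_apply w⟩
  exact ⟨φ d, ⟨d, hd, rfl⟩, by simpa using φ.map_rel_iff.2 hadj⟩

section PartialFactorization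

variable {W : Type*} {V : ℕ → Type*} (Λ : SimpleGraph W) (F : ∀ n, SimpleGraph (V n))

/-- A set `s` of pairs `(⟨n, x⟩, a)` is read as partial maps sending the vertex `x` of `F n`
to the vertex `a` of `Λ`; `coveredEdges F s n` is the image of the edges of `F n`. -/
def coveredEdges (s : Set ((Σ n, V n) × W)) (n : ℕ) : Set (Sym2 W) :=
  {e | ∃ x y a b, (F n).Adj x y ∧ (⟨n, x⟩, a) ∈ s ∧ (⟨n, y⟩, b) ∈ s ∧ s(a, b) = e}

structure IsPartialFactorization (s : Set ((Σ n, V n) × W)) : Prop where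
  right_unique {n : ℕ} {x : V n} {a b : W} : (⟨n, x⟩, a) ∈ s → (⟨n, x⟩, b) ∈ s → a = b
  left_unique {n : ℕ} {x y : V n} {a : W} : (⟨n, x⟩, a) ∈ s → (⟨n, y⟩, a) ∈ s → x = y
  adj {n : ℕ} {x y : V n} {a b : W} :
    (⟨n, x⟩, a) ∈ s → (⟨n, y⟩, b) ∈ s → (F n).Adj x y → Λ.Adj a b
  eq_of_mem_coveredEdges {n m : ℕ} {e : Sym2 W} :
    e ∈ coveredEdges F s n → e ∈ coveredEdges F s m → n = m

abbrev PartialFactorization :=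
  {s : Set ((Σ n, V n) × W) // s.Finite ∧ IsPartialFactorization Λ F s}

variable {Λ F} {s t : Set ((Σ n, V n) × W)}

theorem coveredEdges_mono (hst : s ⊆ t) (n : ℕ) : coveredEdges F s n ⊆ coveredEdges F t n :=
  fun _ ⟨x, y, a, b, hxy, ha, hb, he⟩ => ⟨x, y, a, b, hxy, hst ha, hst hb, he⟩

theorem mem_snd_of_mem_coveredEdges {n : ℕ} {e : Sym2 W} {c : W} (he : e ∈ coveredEdges F s n)
    (hc : c ∈ e) : c ∈ Prod.snd '' s := by
  obtain ⟨x, y, a, b, -, ha, hb, rfl⟩ := he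
  rcases Sym2.mem_iff.1 hc with rfl | rfl
  exacts [⟨_, ha, rfl⟩, ⟨_, hb, rfl⟩]

theorem coveredEdges_insert_subset {n m : ℕ} {x : V n} {a : W} :
    coveredEdges F (insert (⟨n, x⟩, a) s) m ⊆ coveredEdges F s m ∪
      {e | m = n ∧ ∃ y b, (⟨n, y⟩, b) ∈ s ∧ (F n).Adj x y ∧ s(a, b) = e} := by
  rintro e ⟨y₁, y₂, b₁, b₂, hadj, h₁ | h₁, h₂ | h₂, rfl⟩
  · cases h₁; cases h₂; exact (hadj.ne rfl).elim
  · cases h₁; exact Or.inr ⟨rfl, y₂, b₂, h₂, hadj, rfl⟩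
  · cases h₂; exact Or.inr ⟨rfl, y₁, b₁, h₁, hadj.symm, Sym2.eq_swap⟩
  · exact Or.inl ⟨y₁, y₂, b₁, b₂, hadj, h₁, h₂, rfl⟩

theorem isPartialFactorization_empty : IsPartialFactorization Λ F ∅ where
  right_unique h := h.elim
  left_unique h := h.elim
  adj h := h.elim
  eq_of_mem_coveredEdges := fun ⟨_, _, _, _, _, h, _⟩ => h.elim

theorem IsPartialFactorization.insert (hs : IsPartialFactorization Λ F s) {n : ℕ} {x : V n}
    {a : W} (hx : ∀ b, (⟨n, x⟩, b) ∉ s) (ha : ∀ y, (⟨n, y⟩, a) ∉ s)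
    (hnbr : ∀ y b, (⟨n, y⟩, b) ∈ s → (F n).Adj x y →
      Λ.Adj a b ∧ ∀ m, s(a, b) ∈ coveredEdges F s m → m = n) :
    IsPartialFactorization Λ F (insert (⟨n, x⟩, a) s) where
  right_unique := by
    rintro m y b₁ b₂ (h₁ | h₁) (h₂ | h₂)
    · cases h₁; cases h₂; rfl
    · cases h₁; exact (hx _ h₂).elim
    · cases h₂; exact (hx _ h₁).elim
    · exact hs.right_unique h₁ h₂
  left_unique := by
    rintro m y₁ y₂ b (h₁ | h₁) (h₂ | h₂)
    · cases h₁; cases h₂; rfl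
    · cases h₁; exact (ha _ h₂).elim
    · cases h₂; exact (ha _ h₁).elim
    · exact hs.left_unique h₁ h₂
  adj := by
    rintro m y₁ y₂ b₁ b₂ (h₁ | h₁) (h₂ | h₂) hadj
    · cases h₁; cases h₂; exact (hadj.ne rfl).elim
    · cases h₁; exact (hnbr _ _ h₂ hadj).1
    · cases h₂; exact (hnbr _ _ h₁ hadj.symm).1.symm
    · exact hs.adj h₁ h₂ hadj
  eq_of_mem_coveredEdges := by
    intro m₁ m₂ e he₁ he₂
    rcases coveredEdges_insert_subset he₁ with h₁ | ⟨rfl, y₁, b₁, hy₁, hadj₁, rfl⟩ <;>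
      rcases coveredEdges_insert_subset he₂ with h₂ | ⟨rfl, y₂, b₂, hy₂, hadj₂, he⟩
    · exact hs.eq_of_mem_coveredEdges h₁ h₂
    · exact (hnbr _ _ hy₂ hadj₂).2 _ (he ▸ h₁)
    · exact ((hnbr _ _ hy₁ hadj₁).2 _ h₂).symm
    · rfl

theorem IsPartialFactorization.sUnion {c : Set (Set ((Σ n, V n) × W))}
    (hc : DirectedOn (· ⊆ ·) c) (hgood : ∀ s ∈ c, IsPartialFactorization Λ F s) :
    IsPartialFactorization Λ F (⋃₀ c) := by
  have upper {p q} (hp : p ∈ ⋃₀ c) (hq : q ∈ ⋃₀ c) : ∃ s ∈ c, p ∈ s ∧ q ∈ s := by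
    obtain ⟨s, hs, hps⟩ := hp
    obtain ⟨t, ht, hqt⟩ := hq
    obtain ⟨u, hu, hsu, htu⟩ := hc s hs t ht
    exact ⟨u, hu, hsu hps, htu hqt⟩
  have covered {n e} (he : e ∈ coveredEdges F (⋃₀ c) n) : ∃ s ∈ c, e ∈ coveredEdges F s n := by
    obtain ⟨x, y, a, b, hxy, ha, hb, rfl⟩ := he
    obtain ⟨s, hs, ha, hb⟩ := upper ha hb
    exact ⟨s, hs, x, y, a, b, hxy, ha, hb, rfl⟩
  refine ⟨fun ha hb => ?_, fun ha hb => ?_, fun ha hb hxy => ?_, fun he₁ he₂ => ?_⟩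
  · obtain ⟨s, hs, ha, hb⟩ := upper ha hb
    exact (hgood s hs).right_unique ha hb
  · obtain ⟨s, hs, ha, hb⟩ := upper ha hb
    exact (hgood s hs).left_unique ha hb
  · obtain ⟨s, hs, ha, hb⟩ := upper ha hb
    exact (hgood s hs).adj ha hb hxy
  · obtain ⟨s₁, hs₁, he₁⟩ := covered he₁
    obtain ⟨s₂, hs₂, he₂⟩ := covered he₂
    obtain ⟨u, hu, h₁u, h₂u⟩ := hc s₁ hs₁ s₂ hs₂
    exact (hgood u hu).eq_of_mem_coveredEdges (coveredEdges_mono h₁u _ he₁)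
      (coveredEdges_mono h₂u _ he₂)

theorem isCofinal_mem_domain
    (hext : ∀ A B : Set W, A.Finite → B.Finite → ∃ w ∉ B, ∀ a ∈ A, Λ.Adj w a) (n : ℕ) (x : V n) :
    IsCofinal {S : PartialFactorization Λ F | ∃ a, (⟨n, x⟩, a) ∈ S.1} := by
  rintro ⟨s, hfin, hs⟩
  by_cases hx : ∃ a, (⟨n, x⟩, a) ∈ s
  · exact ⟨⟨s, hfin, hs⟩, hx, le_rfl⟩
  push Not at hx
  have hfinA : {b | ∃ y, (⟨n, y⟩, b) ∈ s ∧ (F n).Adj x y}.Finite :=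
    (hfin.image Prod.snd).subset fun b ⟨_, hy, _⟩ => ⟨_, hy, rfl⟩
  obtain ⟨a, ha, hadj⟩ := hext _ _ hfinA (hfin.image Prod.snd)
  have hs' : IsPartialFactorization Λ F (insert (⟨n, x⟩, a) s) :=
    hs.insert hx (fun y hy => ha ⟨_, hy, rfl⟩) fun y b hy hxy =>
      ⟨hadj b ⟨y, hy, hxy⟩, fun _ hm =>
        (ha (mem_snd_of_mem_coveredEdges hm (Sym2.mem_mk_left a b))).elim⟩
  exact ⟨⟨_, hfin.insert _, hs'⟩, ⟨a, Set.mem_insert _ _⟩, Set.subset_insert _ _⟩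

theorem isCofinal_mem_range {n : ℕ}
    (hdom : ∀ D : Set (V n), IsDominatingSet (F n) D → D.Infinite) (a : W) :
    IsCofinal {S : PartialFactorization Λ F | ∃ x, (⟨n, x⟩, a) ∈ S.1} := by
  rintro ⟨s, hfin, hs⟩
  by_cases ha : ∃ x, (⟨n, x⟩, a) ∈ s
  · exact ⟨⟨s, hfin, hs⟩, ha, le_rfl⟩
  push Not at ha
  set D := {x : V n | ∃ b, (⟨n, x⟩, b) ∈ s}
  have hD : D.Finite :=
    ((hfin.image Prod.fst).preimage sigma_mk_injective.injOn).subset fun x ⟨b, hb⟩ => ⟨_, hb, rfl⟩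
  obtain ⟨x, hxD, hxnadj⟩ : ∃ x ∉ D, ∀ d ∈ D, ¬(F n).Adj x d := by
    simpa [IsDominatingSet] using fun h => hdom D h hD
  have hs' : IsPartialFactorization Λ F (insert (⟨n, x⟩, a) s) :=
    hs.insert (fun b hb => hxD ⟨b, hb⟩) ha fun y b hy hxy => (hxnadj y ⟨b, hy⟩ hxy).elim
  exact ⟨⟨_, hfin.insert _, hs'⟩, ⟨x, Set.mem_insert _ _⟩, Set.subset_insert _ _⟩

theorem isCofinal_mem_coveredEdges (hne : ∀ n, (F n).edgeSet.Nonempty) (e : Sym2 W) :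
    IsCofinal {S : PartialFactorization Λ F | e ∈ Λ.edgeSet → ∃ n, e ∈ coveredEdges F S.1 n} := by
  rintro ⟨s, hfin, hs⟩
  by_cases hcov : e ∈ Λ.edgeSet → ∃ n, e ∈ coveredEdges F s n
  · exact ⟨⟨s, hfin, hs⟩, hcov, le_rfl⟩
  push Not at hcov
  obtain ⟨he, hunc⟩ := hcov
  induction e using Sym2.ind with | _ a b => ?_
  obtain ⟨n, hn⟩ : ∃ n, ∀ p ∈ s, p.1.1 ≠ n :=
    (hfin.image fun p => p.1.1).infinite_compl.nonempty.imp fun n hn p hp h => hn ⟨p, hp, h⟩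
  obtain ⟨x, y, hxy⟩ := (F n).ne_bot_iff_exists_adj.1 ((F n).edgeSet_nonempty.1 (hne n))
  have hs₁ : IsPartialFactorization Λ F (insert (⟨n, x⟩, a) s) :=
    hs.insert (fun _ h => hn _ h rfl) (fun _ h => hn _ h rfl) fun _ _ h => (hn _ h rfl).elim
  have hs₂ : IsPartialFactorization Λ F (insert (⟨n, y⟩, b) (insert (⟨n, x⟩, a) s)) := by
    refine hs₁.insert ?_ ?_ ?_
    · rintro c (h | h)
      · cases h; exact hxy.ne rfl
      · exact hn _ h rfl
    · rintro z (h | h)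
      · cases h; exact he.ne rfl
      · exact hn _ h rfl
    · rintro z c (h | h) -
      · cases h
        refine ⟨he.symm, fun m hm => ?_⟩
        rcases coveredEdges_insert_subset hm with hm | ⟨hm, -⟩
        · exact (hunc m (Sym2.eq_swap ▸ hm)).elim
        · exact hm
      · exact (hn _ h rfl).elim
  refine ⟨⟨_, (hfin.insert _).insert _, hs₂⟩, fun _ => ⟨n, x, y, a, b, hxy, ?_, ?_, rfl⟩,
    (Set.subset_insert _ _).trans (Set.subset_insert _ _)⟩
  · exact Set.mem_insert_of_mem _ (Set.mem_insert _ _)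
  · exact Set.mem_insert _ _

theorem IsPartialFactorization.exists_factorization {L : Set ((Σ n, V n) × W)}
    (hL : IsPartialFactorization Λ F L) (htot : ∀ n x, ∃ a, (⟨n, x⟩, a) ∈ L)
    (hsurj : ∀ n a, ∃ x, (⟨n, x⟩, a) ∈ L) (hcov : ∀ e ∈ Λ.edgeSet, ∃ n, e ∈ coveredEdges F L n) :
    ∃ G : ℕ → SimpleGraph W, IsFactorization Λ G ∧ ∀ n, Nonempty (F n ≃g G n) := by
  choose f hf using htot
  have hfeq {n x a} (h : (⟨n, x⟩, a) ∈ L) : f n x = a := hL.right_unique (hf n x) h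
  let σ n : V n ≃ W := Equiv.ofBijective (f n)
    ⟨fun x y h => hL.left_unique (hf n x) (h ▸ hf n y), fun a => (hsurj n a).imp fun _ => hfeq⟩
  have hedges n : ((F n).map (σ n)).edgeSet = coveredEdges F L n := by
    refine (SimpleGraph.edgeSet_map (σ n).toEmbedding (F n)).trans (Set.ext fun e => ⟨?_, ?_⟩)
    · rintro ⟨e, he, rfl⟩
      induction e using Sym2.ind with | _ x y => exact ⟨x, y, _, _, he, hf n x, hf n y, rfl⟩
    · rintro ⟨x, y, a, b, hxy, ha, hb, rfl⟩
      exact ⟨s(x, y), hxy, by rw [← hfeq ha, ← hfeq hb]; rfl⟩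
  refine ⟨fun n => (F n).map (σ n), ⟨fun n => ?_, fun e he => ?_⟩,
    fun n => ⟨SimpleGraph.Iso.map (σ n) (F n)⟩⟩
  · rw [← SimpleGraph.edgeSet_subset_edgeSet, hedges]
    rintro _ ⟨x, y, a, b, hxy, ha, hb, rfl⟩
    exact hL.adj ha hb hxy
  · obtain ⟨n, hn⟩ := hcov e he
    refine ⟨n, ?_, fun m hm => hL.eq_of_mem_coveredEdges ?_ hn⟩
    · simpa only [hedges] using hn
    · simpa only [hedges] using hm

theorem exists_factorization_of_extension [Countable W] [∀ n, Countable (V n)]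
    (hext : ∀ A B : Set W, A.Finite → B.Finite → ∃ w ∉ B, ∀ a ∈ A, Λ.Adj w a)
    (hne : ∀ n, (F n).edgeSet.Nonempty)
    (hdom : ∀ n (D : Set (V n)), IsDominatingSet (F n) D → D.Infinite) :
    ∃ G : ℕ → SimpleGraph W, IsFactorization Λ G ∧ ∀ n, Nonempty (F n ≃g G n) := by
  let ι := (Σ n, V n) ⊕ (ℕ × W) ⊕ Sym2 W
  have : Encodable ι := Encodable.ofCountable ι
  let 𝒟 : ι → Order.Cofinal (PartialFactorization Λ F)
    | .inl ⟨n, x⟩ => ⟨_, isCofinal_mem_domain hext n x⟩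
    | .inr (.inl (n, a)) => ⟨_, isCofinal_mem_range (hdom n) a⟩
    | .inr (.inr e) => ⟨_, isCofinal_mem_coveredEdges hne e⟩
  let I := Order.idealOfCofinals ⟨∅, Set.finite_empty, isPartialFactorization_empty⟩ 𝒟
  have hI : ∀ S ∈ I, S.1 ⊆ ⋃₀ (Subtype.val '' (I : Set (PartialFactorization Λ F))) :=
    fun S hS => Set.subset_sUnion_of_mem ⟨S, hS, rfl⟩
  have hL := IsPartialFactorization.sUnion (directedOn_image.2 I.directed)
    (by rintro _ ⟨S, -, rfl⟩; exact S.2.2)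
  refine hL.exists_factorization (fun n x => ?_) (fun n a => ?_) fun e he => ?_
  · obtain ⟨S, ⟨a, ha⟩, hS⟩ := Order.cofinal_meets_idealOfCofinals _ 𝒟 (.inl ⟨n, x⟩)
    exact ⟨a, hI S hS ha⟩
  · obtain ⟨S, ⟨x, hx⟩, hS⟩ := Order.cofinal_meets_idealOfCofinals _ 𝒟 (.inr (.inl (n, a)))
    exact ⟨x, hI S hS hx⟩
  · obtain ⟨S, hcov, hS⟩ := Order.cofinal_meets_idealOfCofinals _ 𝒟 (.inr (.inr e))
    exact (hcov he).imp fun n h => coveredEdges_mono (hI S hS) n h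

end PartialFactorization

/-- for a countable family of countable (non-empty) graphs, the
factorization problem `FP(𝓕, R)` for the Rado graph has a solution iff every
graph of the family has infinite domination number (no finite dominating set). -/
theorem stmt_0 (V : ℕ → Type) [∀ n, Countable (V n)]
    (F : ∀ n, SimpleGraph (V n)) (hne : ∀ n, (F n).edgeSet.Nonempty) :
    (∃ G : ℕ → SimpleGraph ℕ, IsFactorization Rado G ∧ ∀ n, Nonempty (F n ≃g G n)) ↔
      ∀ n (D : Set (V n)), IsDominatingSet (F n) D → D.Infinite := by
  refine ⟨fun ⟨G, hG, hiso⟩ n D hD hfin => ?_,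
    exists_factorization_of_extension (fun _ _ => rado_exists_adj_forall) hne⟩
  obtain ⟨φ⟩ := hiso n
  exact rado_not_isDominatingSet (hfin.image φ) ((hD.image_iso φ).mono (hG.1 n))
end

section
/- Let ℵ be an infinite cardinal and let F = {F_α : α ∈ A} be a family of simple graphs, each of order ℵ, such that |A| = ℵ and the domination number of each graph in F equals ℵ (i.e., no graph in F has a dominating set of cardinality less than ℵ). Then there exists a factorization {Γ_α : α ∈ A} of the complete graph K_ℵ on ℵ vertices such that Γ_α is isomorphic to F_α for every α ∈ A; that is, FP(F) has a solution. -/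
universe u

/-! Enumerate in order type `ℵ.ord` the requirements: every pair of distinct points of `X` is
covered by the image of an edge of some `F a`, every vertex of every `F a` is placed in `X`, and
every point of `X` is hit by every `F a`. Build partial embeddings of all `F a` into `X` with
pairwise edge-disjoint images by transfinite recursion, meeting one requirement per step with at
most two new placements, so that fewer than `ℵ` placements exist at every stage. A pair is covered
by an index `a` not used so far; a vertex is sent to a point of `X` used by no embedding; a point
`x` is hit by `F a` through a vertex that is neither placed nor adjacent to a placed vertex, which
exists because the placed vertices of `F a` do not dominate it. -/

open Cardinal Set

section TransfiniteConstruction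

theorem mk_iUnion_lt_of_finite {ι β : Type u} {κ : Cardinal.{u}} (hκ : ℵ₀ ≤ κ) (hι : #ι < κ)
    {f : ι → Set β} (hf : ∀ i, (f i).Finite) : #(⋃ i, f i) < κ := by
  rcases lt_or_ge #ι ℵ₀ with hfin | hinf
  · have := lt_aleph0_iff_finite.1 hfin
    exact (finite_iUnion hf).lt_aleph0.trans_le hκ
  · calc #(⋃ i, f i) ≤ #ι * ℵ₀ :=
          (mk_iUnion_le f).trans (mul_le_mul_right (ciSup_le' fun i => (hf i).lt_aleph0.le) _)
      _ = #ι := mul_aleph0_eq hinf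
      _ < κ := hι

theorem biUnion_Iio_subset_biUnion_Iio_sdiff {ι β : Type*} [Preorder ι] [WellFoundedLT ι]
    (g : ι → Set β) (i : ι) :
    ⋃ j ∈ Iio i, g j ⊆ ⋃ j ∈ Iio i, (g j \ ⋃ k ∈ Iio j, g k) := by
  intro x hx
  simp only [mem_iUnion, mem_Iio, exists_prop] at hx
  obtain ⟨j, ⟨hji, hxj⟩, hmin⟩ := wellFounded_lt.has_min {j | j < i ∧ x ∈ g j} hx
  simp only [mem_iUnion, mem_sdiff, mem_Iio, not_exists]
  exact ⟨j, hji, hxj, fun k hkj hxk => hmin k ⟨hkj.trans hji, hxk⟩ hkj⟩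

theorem isChain_image_of_biUnion_Iio_subset {ι β : Type*} [LinearOrder ι] {g : ι → Set β}
    {S : Set ι} (h : ∀ i ∈ S, ⋃ j ∈ Iio i, g j ⊆ g i) : IsChain (· ⊆ ·) (g '' S) := by
  rintro _ ⟨j, hj, rfl⟩ _ ⟨k, hk, rfl⟩ hne
  rcases lt_trichotomy j k with hjk | rfl | hkj
  · exact .inl ((subset_biUnion_of_mem (u := g) (show j ∈ Iio k from hjk)).trans (h k hk))
  · exact absurd rfl hne
  · exact .inr ((subset_biUnion_of_mem (u := g) (show k ∈ Iio j from hkj)).trans (h j hj))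

variable {ι β : Type u} {T : Type*} [LinearOrder ι] [WellFoundedLT ι]

noncomputable def stage (ext : T → Set β → Set β) (τ : ι → T) : ι → Set β :=
  WellFoundedLT.fix fun i ih => ext (τ i) (⋃ j, ⋃ h : j < i, ih j h)

theorem stage_eq (ext : T → Set β → Set β) (τ : ι → T) (i : ι) :
    stage ext τ i = ext (τ i) (⋃ j ∈ Iio i, stage ext τ j) := by
  rw [stage, WellFoundedLT.fix_eq]
  rfl

theorem stage_spec {κ : Cardinal.{u}}
    {good : Set β → Prop} {goal : T → Set β → Prop} (hκ : ℵ₀ ≤ κ) (hι : ∀ i : ι, #(Iio i) < κ)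
    (hgood : ∀ c, IsChain (· ⊆ ·) c → (∀ s ∈ c, good s) → good (⋃₀ c))
    {ext : T → Set β → Set β}
    (hext : ∀ t s, good s → #s < κ →
      s ⊆ ext t s ∧ (ext t s \ s).Finite ∧ good (ext t s) ∧ goal t (ext t s))
    (τ : ι → T) (i : ι) :
    ⋃ j ∈ Iio i, stage ext τ j ⊆ stage ext τ i ∧
      (stage ext τ i \ ⋃ j ∈ Iio i, stage ext τ j).Finite ∧
      good (stage ext τ i) ∧ goal (τ i) (stage ext τ i) := by
  induction i using WellFoundedLT.induction with
  | _ i ih =>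
    have hchain : IsChain (· ⊆ ·) (stage ext τ '' Iio i) :=
      isChain_image_of_biUnion_Iio_subset fun j hj => (ih j hj).1
    have hprev_good : good (⋃ j ∈ Iio i, stage ext τ j) := by
      rw [← sUnion_image]
      exact hgood _ hchain (forall_mem_image.2 fun j hj => (ih j hj).2.2.1)
    have hprev_small : #(⋃ j ∈ Iio i, stage ext τ j : Set β) < κ := by
      refine (mk_le_mk_of_subset (biUnion_Iio_subset_biUnion_Iio_sdiff _ i)).trans_lt ?_
      rw [biUnion_eq_iUnion]
      exact mk_iUnion_lt_of_finite hκ (hι i) fun j => (ih j j.2).2.1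
    rw [stage_eq]
    exact hext _ _ hprev_good hprev_small

end TransfiniteConstruction

theorem exists_forall_of_extend {β T : Type u} {κ : Cardinal.{u}} (hκ : ℵ₀ ≤ κ) (hT : #T ≤ κ)
    {good : Set β → Prop} (hgood : ∀ c, IsChain (· ⊆ ·) c → (∀ s ∈ c, good s) → good (⋃₀ c))
    {goal : T → Set β → Prop} (hgoal : ∀ t, Monotone (goal t))
    (hext : ∀ t s, good s → #s < κ → ∃ s', s ⊆ s' ∧ (s' \ s).Finite ∧ good s' ∧ goal t s') :
    ∃ s, good s ∧ ∀ t, goal t s := by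
  cases isEmpty_or_nonempty T
  · exact ⟨_, hgood ∅ IsChain.empty (fun _ h => h.elim), isEmptyElim⟩
  choose! ext hext using hext
  obtain ⟨e⟩ : Nonempty (T ↪ κ.ord.ToType) := by rwa [← le_def, mk_ord_toType]
  have hspec := stage_spec hκ (fun i => by simpa using mk_Iio_lt i) hgood hext (Function.invFun e)
  refine ⟨⋃₀ (stage ext (Function.invFun e) '' univ),
    hgood _ (isChain_image_of_biUnion_Iio_subset fun i _ => (hspec i).1)
      (forall_mem_image.2 fun i _ => (hspec i).2.2.1), fun t => ?_⟩
  obtain ⟨i, rfl⟩ := Function.invFun_surjective e.injective t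
  exact hgoal _ (subset_sUnion_of_mem (mem_image_of_mem _ (mem_univ i))) (hspec i).2.2.2

section Packing

variable {A X : Type u} {V : A → Type u} (F : ∀ a, SimpleGraph (V a))

/-- `s` is read as a family of partial maps `V a → X`: the triple `⟨a, v, x⟩ ∈ s` sends `v` to
`x`. The pair `(x, y)` is covered in colour `a` if it is the image of an edge of `F a`. -/
def Covers (s : Set (Σ a, V a × X)) (a : A) (x y : X) : Prop :=
  ∃ u v, (F a).Adj u v ∧ ⟨a, u, x⟩ ∈ s ∧ ⟨a, v, y⟩ ∈ s

structure IsPacking (s : Set (Σ a, V a × X)) : Prop where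
  func {a : A} {v : V a} {x y : X} : ⟨a, v, x⟩ ∈ s → ⟨a, v, y⟩ ∈ s → x = y
  inj {a : A} {v w : V a} {x : X} : ⟨a, v, x⟩ ∈ s → ⟨a, w, x⟩ ∈ s → v = w
  disjoint {a b : A} {x y : X} : Covers F s a x y → Covers F s b x y → a = b

variable {F} {s t : Set (Σ a, V a × X)} {a b : A} {x y : X}

theorem Covers.symm (h : Covers F s a x y) : Covers F s a y x :=
  let ⟨u, v, huv, hu, hv⟩ := h
  ⟨v, u, huv.symm, hv, hu⟩

theorem Covers.mono (h : Covers F s a x y) (hst : s ⊆ t) : Covers F t a x y :=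
  let ⟨u, v, huv, hu, hv⟩ := h
  ⟨u, v, huv, hst hu, hst hv⟩

theorem Covers.of_sym2_eq {x' y' : X} (h : Covers F s a x y) (he : s(x, y) = s(x', y')) :
    Covers F s a x' y' := by
  rcases Sym2.eq_iff.1 he with ⟨rfl, rfl⟩ | ⟨rfl, rfl⟩
  exacts [h, h.symm]

theorem Covers.left_mem (h : Covers F s a x y) : ∃ b w, ⟨b, w, x⟩ ∈ s :=
  let ⟨u, _, _, hu, _⟩ := h
  ⟨a, u, hu⟩

theorem covers_insert {v : V a} {x₁ y₁ : X} (h : Covers F (insert ⟨a, v, x⟩ s) b x₁ y₁) :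
    Covers F s b x₁ y₁ ∨
      b = a ∧ ∃ w y, (F a).Adj v w ∧ ⟨a, w, y⟩ ∈ s ∧ s(x₁, y₁) = s(x, y) := by
  obtain ⟨u₁, v₁, hadj, h₁ | h₁, h₂ | h₂⟩ := h
  · cases h₁; cases h₂
    exact absurd hadj (SimpleGraph.irrefl _)
  · cases h₁
    exact .inr ⟨rfl, v₁, y₁, hadj, h₂, rfl⟩
  · cases h₂
    exact .inr ⟨rfl, u₁, x₁, hadj.symm, h₁, Sym2.eq_swap⟩
  · exact .inl ⟨u₁, v₁, hadj, h₁, h₂⟩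

theorem IsPacking.insert (hs : IsPacking F s) {v : V a} (hv : ∀ y, ⟨a, v, y⟩ ∉ s)
    (hx : ∀ w, ⟨a, w, x⟩ ∉ s)
    (hnew : ∀ w y, (F a).Adj v w → ⟨a, w, y⟩ ∈ s → ∀ b, ¬ Covers F s b x y) :
    IsPacking F (insert ⟨a, v, x⟩ s) where
  func := by
    rintro b w y₁ y₂ (h₁ | h₁) (h₂ | h₂)
    · cases h₁; cases h₂; rfl
    · cases h₁; exact absurd h₂ (hv _)
    · cases h₂; exact absurd h₁ (hv _)
    · exact hs.func h₁ h₂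
  inj := by
    rintro b w₁ w₂ z (h₁ | h₁) (h₂ | h₂)
    · cases h₁; cases h₂; rfl
    · cases h₁; exact absurd h₂ (hx _)
    · cases h₂; exact absurd h₁ (hx _)
    · exact hs.inj h₁ h₂
  disjoint := by
    intro b c x₁ y₁ hb hc
    rcases covers_insert hb with hb' | ⟨rfl, w, y, hadj, hw, he⟩ <;>
      rcases covers_insert hc with hc' | ⟨rfl, w', y', hadj', hw', he'⟩
    · exact hs.disjoint hb' hc'
    · exact absurd (hb'.of_sym2_eq he') (hnew w' y' hadj' hw' b)
    · exact absurd (hc'.of_sym2_eq he) (hnew w y hadj hw c)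
    · rfl

theorem isPacking_sUnion {c : Set (Set (Σ a, V a × X))} (hc : IsChain (· ⊆ ·) c)
    (h : ∀ s ∈ c, IsPacking F s) : IsPacking F (⋃₀ c) := by
  rcases c.eq_empty_or_nonempty with rfl | hne
  · refine ⟨?_, ?_, ?_⟩ <;> simp [Covers]
  have within : ∀ S : Set (Σ a, V a × X), S.Finite → S ⊆ ⋃₀ c → ∃ t ∈ c, S ⊆ t :=
    fun S hS hSc => hc.directedOn.exists_mem_subset_of_finite_of_subset_sUnion hne hS hSc
  refine ⟨fun h₁ h₂ => ?_, fun h₁ h₂ => ?_, ?_⟩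
  · obtain ⟨t, ht, hsub⟩ := within {_, _} (toFinite _) (pair_subset h₁ h₂)
    obtain ⟨h₁, h₂⟩ := pair_subset_iff.1 hsub
    exact (h t ht).func h₁ h₂
  · obtain ⟨t, ht, hsub⟩ := within {_, _} (toFinite _) (pair_subset h₁ h₂)
    obtain ⟨h₁, h₂⟩ := pair_subset_iff.1 hsub
    exact (h t ht).inj h₁ h₂
  · rintro a b x y ⟨u, v, huv, hu, hv⟩ ⟨u', v', huv', hu', hv'⟩
    obtain ⟨t, ht, hsub⟩ := within {_, _, _, _} (toFinite _)
      (by simp only [insert_subset_iff, singleton_subset_iff]; exact ⟨hu, hv, hu', hv'⟩)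
    simp only [insert_subset_iff, singleton_subset_iff] at hsub
    obtain ⟨hu, hv, hu', hv'⟩ := hsub
    exact (h t ht).disjoint ⟨u, v, huv, hu, hv⟩ ⟨u', v', huv', hu', hv'⟩

end Packing

section Extension

variable {A X : Type u} {V : A → Type u} {F : ∀ a, SimpleGraph (V a)} {s : Set (Σ a, V a × X)}

theorem finite_insert_sdiff {α : Type*} {s t : Set α} (p : α) (h : (t \ s).Finite) :
    (insert p t \ s).Finite :=
  (h.insert p).subset fun _ ⟨hq, hqs⟩ => hq.imp_right fun hqt => ⟨hqt, hqs⟩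

theorem exists_covers_extension (hs : IsPacking F s) (hsA : #s < #A)
    (hne : ∀ a, (F a).edgeSet.Nonempty) {x y : X} (hxy : x ≠ y) :
    ∃ s', s ⊆ s' ∧ (s' \ s).Finite ∧ IsPacking F s' ∧ ∃ a, Covers F s' a x y := by
  by_cases hcov : ∃ a, Covers F s a x y
  · exact ⟨s, subset_rfl, by simp, hs, hcov⟩
  obtain ⟨a, ha⟩ := compl_nonempty_of_mk_lt_mk (mk_image_le.trans_lt hsA : #(Sigma.fst '' s) < _)
  have hfresh : ∀ w z, ⟨a, w, z⟩ ∉ s := fun w z h => ha ⟨_, h, rfl⟩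
  obtain ⟨u, w, huw⟩ : ∃ u w, (F a).Adj u w := by
    obtain ⟨e, he⟩ := hne a
    induction e using Sym2.ind with
    | _ u w => exact ⟨u, w, he⟩
  have hs₁ : IsPacking F (insert ⟨a, u, x⟩ s) :=
    hs.insert (hfresh u) (hfresh · x) fun w z _ h => absurd h (hfresh w z)
  have hs₂ : IsPacking F (insert ⟨a, w, y⟩ (insert ⟨a, u, x⟩ s)) := by
    refine hs₁.insert ?_ ?_ ?_
    · rintro z (h | h)
      · cases h; exact huw.ne rfl
      · exact hfresh w z h
    · rintro w' (h | h)
      · cases h; exact hxy rfl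
      · exact hfresh w' y h
    · rintro w' z - (h | h) b hb
      · cases h
        rcases covers_insert hb with hb' | ⟨-, w'', z, -, h, -⟩
        · exact hcov ⟨b, hb'.symm⟩
        · exact hfresh w'' z h
      · exact hfresh w' z h
  refine ⟨_, (subset_insert _ _).trans (subset_insert _ _), ?_, hs₂,
    a, u, w, huw, mem_insert_of_mem _ (mem_insert _ _), mem_insert _ _⟩
  exact finite_insert_sdiff _ (finite_insert_sdiff _ (by simp))

theorem exists_mem_dom_extension (hs : IsPacking F s) (hsX : #s < #X) (a : A)
    (v : V a) : ∃ s', s ⊆ s' ∧ (s' \ s).Finite ∧ IsPacking F s' ∧ ∃ x, ⟨a, v, x⟩ ∈ s' := by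
  by_cases hv : ∃ x, ⟨a, v, x⟩ ∈ s
  · exact ⟨s, subset_rfl, by simp, hs, hv⟩
  push Not at hv
  obtain ⟨x, hx⟩ :=
    compl_nonempty_of_mk_lt_mk (mk_image_le.trans_lt hsX : #((·.2.2) '' s) < _)
  have hfresh : ∀ b w, ⟨b, w, x⟩ ∉ s := fun b w h => hx ⟨_, h, rfl⟩
  refine ⟨_, subset_insert _ _, finite_insert_sdiff _ (by simp),
    hs.insert hv (hfresh a) fun _ _ _ _ b hb => ?_, x, mem_insert _ _⟩
  obtain ⟨c, w, h⟩ := hb.left_mem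
  exact hfresh c w h

theorem mk_dom_le (s : Set (Σ a, V a × X)) (a : A) : #{v : V a | ∃ x, ⟨a, v, x⟩ ∈ s} ≤ #s := by
  have hdom : {v : V a | ∃ x, ⟨a, v, x⟩ ∈ s} =
      Prod.fst '' (Sigma.mk (β := fun a => V a × X) a ⁻¹' s) := by
    ext v; simp
  rw [hdom]
  exact mk_image_le.trans (mk_preimage_of_injective _ _ sigma_mk_injective)

theorem exists_mem_ran_extension {κ : Cardinal.{u}} (hs : IsPacking F s)
    (hsκ : #s < κ) {a : A} (hdom : ∀ D, IsDominatingSet (F a) D → κ ≤ #D) (x : X) :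
    ∃ s', s ⊆ s' ∧ (s' \ s).Finite ∧ IsPacking F s' ∧ ∃ v, ⟨a, v, x⟩ ∈ s' := by
  by_cases hx : ∃ v, ⟨a, v, x⟩ ∈ s
  · exact ⟨s, subset_rfl, by simp, hs, hx⟩
  push Not at hx
  have hnd : ¬ IsDominatingSet (F a) {v | ∃ x, ⟨a, v, x⟩ ∈ s} :=
    fun hD => (hdom _ hD).not_gt ((mk_dom_le s a).trans_lt hsκ)
  simp only [IsDominatingSet, not_forall, not_exists, not_and] at hnd
  obtain ⟨v, hv, hisolated⟩ := hnd
  refine ⟨_, subset_insert _ _, finite_insert_sdiff _ (by simp),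
    hs.insert (fun y h => hv ⟨y, h⟩) hx fun w y hvw hw => absurd hvw (hisolated w ⟨y, hw⟩),
    v, mem_insert _ _⟩

end Extension

section Factorization

variable {A X : Type u} {V : A → Type u} {F : ∀ a, SimpleGraph (V a)} {s : Set (Σ a, V a × X)}

def IsPacking.graph (hs : IsPacking F s) (a : A) : SimpleGraph X where
  Adj := Covers F s a
  symm := ⟨fun _ _ => Covers.symm⟩
  loopless := ⟨fun _ ⟨_, _, huv, hu, hv⟩ => huv.ne (hs.inj hu hv)⟩

theorem IsPacking.isFactorization_graph (hs : IsPacking F s)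
    (hcov : ∀ x y, x ≠ y → ∃ a, Covers F s a x y) : IsFactorization ⊤ hs.graph := by
  refine ⟨fun _ => le_top, fun e he => ?_⟩
  induction e using Sym2.ind with
  | _ x y =>
    obtain ⟨a, ha⟩ := hcov x y he
    exact ⟨a, ha, fun b hb => hs.disjoint hb ha⟩

theorem IsPacking.nonempty_iso_graph (hs : IsPacking F s) {a : A}
    (hdom : ∀ v, ∃ x, ⟨a, v, x⟩ ∈ s) (hran : ∀ x, ∃ v, ⟨a, v, x⟩ ∈ s) :
    Nonempty (F a ≃g hs.graph a) := by
  choose φ hφ using hdom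
  have hφ_bij : Function.Bijective φ :=
    ⟨fun u v h => hs.inj (hφ u) (h ▸ hφ v),
      fun x => let ⟨v, hv⟩ := hran x; ⟨v, hs.func (hφ v) hv⟩⟩
  refine ⟨⟨Equiv.ofBijective φ hφ_bij, fun {u v} => ⟨?_, fun h => ⟨u, v, h, hφ u, hφ v⟩⟩⟩⟩
  rintro ⟨u', v', h, hu, hv⟩
  rwa [hs.inj hu (hφ u), hs.inj hv (hφ v)] at h

theorem exists_isPacking_complete {κ : Cardinal.{u}} (hκ : ℵ₀ ≤ κ) (hA : #A = κ)
    (hV : ∀ a, #(V a) = κ) (hX : #X = κ) (hne : ∀ a, (F a).edgeSet.Nonempty)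
    (hdom : ∀ a D, IsDominatingSet (F a) D → κ ≤ #D) :
    ∃ s : Set (Σ a, V a × X), IsPacking F s ∧ (∀ x y, x ≠ y → ∃ a, Covers F s a x y) ∧
      (∀ a v, ∃ x, ⟨a, v, x⟩ ∈ s) ∧ (∀ a x, ∃ v, ⟨a, v, x⟩ ∈ s) := by
  have hT : #({p : X × X // p.1 ≠ p.2} ⊕ (Σ a, V a) ⊕ (A × X)) ≤ κ := by
    have hsq : κ * κ = κ := mul_eq_self hκ
    have hpairs : #{p : X × X // p.1 ≠ p.2} ≤ κ :=
      (mk_subtype_le _).trans (by rw [mk_prod, lift_id, hX, hsq])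
    have hsigma : #(Σ a, V a) = κ := by rw [mk_sigma, funext hV, sum_const', hA, hsq]
    simp only [mk_sum, mk_prod, lift_id, hsigma, hA, hX, hsq, add_eq_self hκ]
    exact (add_le_add_left hpairs κ).trans (add_eq_self hκ).le
  obtain ⟨s, hs, hgoal⟩ := exists_forall_of_extend hκ hT (fun _ hc h => isPacking_sUnion hc h)
    (goal := Sum.elim (fun p s => ∃ a, Covers F s a p.1.1 p.1.2)
      (Sum.elim (fun q s => ∃ x, ⟨q.1, q.2, x⟩ ∈ s) (fun r s => ∃ v, ⟨r.1, v, r.2⟩ ∈ s)))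
    (by
      rintro (_ | _ | _) s t hst ⟨b, hb⟩
      exacts [⟨b, hb.mono hst⟩, ⟨b, hst hb⟩, ⟨b, hst hb⟩])
    (by
      rintro (⟨_, hxy⟩ | ⟨a, v⟩ | ⟨a, x⟩) s hs hsκ
      · exact exists_covers_extension hs (hA ▸ hsκ) hne hxy
      · exact exists_mem_dom_extension hs (hX ▸ hsκ) a v
      · exact exists_mem_ran_extension hs hsκ (hdom a) x)
  exact ⟨s, hs, fun x y hxy => hgoal (.inl ⟨(x, y), hxy⟩), fun a v => hgoal (.inr (.inl ⟨a, v⟩)),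
    fun a x => hgoal (.inr (.inr (a, x)))⟩

end Factorization

/-- if `𝓕 = {F a : a ∈ A}` is a family of (non-empty) graphs of order `ℵ`
with `|A| = ℵ` and each `F a` has domination number `ℵ` (no dominating set of
cardinality `< ℵ`), then `FP(𝓕)` has a solution: there is a factorization of the
complete graph `K_ℵ` into graphs `G a` with `G a ≅ F a`. -/
theorem stmt_1 {A : Type u} (ℵ : Cardinal.{u}) (hℵ : Cardinal.aleph0 ≤ ℵ)
    (hA : Cardinal.mk A = ℵ)
    (V : A → Type u) (hV : ∀ a, Cardinal.mk (V a) = ℵ)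
    (F : ∀ a, SimpleGraph (V a)) (hne : ∀ a, (F a).edgeSet.Nonempty)
    (hdom : ∀ a (D : Set (V a)), IsDominatingSet (F a) D → ℵ ≤ Cardinal.mk ↥D)
    (X : Type u) (hX : Cardinal.mk X = ℵ) :
    ∃ G : A → SimpleGraph X, IsFactorization (⊤ : SimpleGraph X) G ∧
      ∀ a, Nonempty (F a ≃g G a) := by
  obtain ⟨s, hs, hcov, hdomain, hrange⟩ := exists_isPacking_complete hℵ hA hV hX hne hdom
  exact ⟨hs.graph, hs.isFactorization_graph hcov,
    fun a => hs.nonempty_iso_graph (hdomain a) (hrange a)⟩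
end

section
/- Let F be a countable family of countable graphs such that the domination number of each graph in F is infinite. Then FP(F) has a solution, i.e., there exists a factorization {Γ_α : α ∈ A} of the complete graph K_ℕ on vertex set ℕ such that Γ_α is isomorphic to F_α for every α. -/
/-!
Transport every graph to the vertex set `ℕ`, obtaining graphs `H n`, and build by a
back-and-forth argument bijections `f n : ℕ → ℕ` such that every edge of `K_ℕ` is the image of
an edge of exactly one `H n`. Finite approximations are extended one requirement at a time:
a vertex of `H n` is placed at a vertex of `K_ℕ` not used so far; a vertex `a` of `K_ℕ` is hit
by a vertex of `H n` adjacent to no vertex placed so far, which exists because no finite set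
dominates `H n`; an uncovered edge `ab` receives an edge of a copy that has not been started.
The Rasiowa–Sikorski lemma meets all these countably many requirements in the limit.
-/

namespace Packing

open SimpleGraph

variable (H : ℕ → SimpleGraph ℕ)

/- A partial packing is a set of triples: `(n, u, a) ∈ S` means that vertex `u` of `H n` is
placed at vertex `a` of `K_ℕ`. -/
def PlacedEdge (S : Set (ℕ × ℕ × ℕ)) (n a b : ℕ) : Prop :=
  ∃ u v, (n, u, a) ∈ S ∧ (n, v, b) ∈ S ∧ (H n).Adj u v

structure IsPartial (S : Set (ℕ × ℕ × ℕ)) : Prop where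
  func : ∀ ⦃n u a b⦄, (n, u, a) ∈ S → (n, u, b) ∈ S → a = b
  inj : ∀ ⦃n u v a⦄, (n, u, a) ∈ S → (n, v, a) ∈ S → u = v
  disj : ∀ ⦃n m a b⦄, PlacedEdge H S n a b → PlacedEdge H S m a b → n = m

/-- The requirements of the construction: vertex `u` of `H n` is placed, vertex `a` of `K_ℕ`
is hit by the copy of `H n`, and the edge `ab` is covered. -/
def Meets (S : Set (ℕ × ℕ × ℕ)) : (ℕ × ℕ) ⊕ (ℕ × ℕ) ⊕ (ℕ × ℕ) → Prop
  | .inl (n, u) => ∃ a, (n, u, a) ∈ S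
  | .inr (.inl (n, a)) => ∃ u, (n, u, a) ∈ S
  | .inr (.inr (a, b)) => a = b ∨ ∃ n, PlacedEdge H S n a b

theorem isPartial_empty : IsPartial H ∅ where
  func _ _ _ _ h := h.elim
  inj _ _ _ _ h := h.elim
  disj _ _ _ _ h := let ⟨_, _, hu, _⟩ := h; hu.elim

variable {H}

section Sets

variable {S T : Set (ℕ × ℕ × ℕ)} {n m u a b : ℕ}

theorem PlacedEdge.symm (h : PlacedEdge H S n a b) : PlacedEdge H S n b a :=
  let ⟨u, v, hu, hv, huv⟩ := h
  ⟨v, u, hv, hu, huv.symm⟩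

theorem PlacedEdge.mono (hST : S ⊆ T) (h : PlacedEdge H S n a b) : PlacedEdge H T n a b :=
  let ⟨u, v, hu, hv, huv⟩ := h
  ⟨u, v, hST hu, hST hv, huv⟩

theorem Meets.mono (hST : S ⊆ T) : ∀ {r}, Meets H S r → Meets H T r
  | .inl _, ⟨a, ha⟩ => ⟨a, hST ha⟩
  | .inr (.inl _), ⟨u, hu⟩ => ⟨u, hST hu⟩
  | .inr (.inr _), h => h.imp_right fun ⟨n, hn⟩ => ⟨n, hn.mono hST⟩

theorem placedEdge_insert {x y : ℕ} (h : PlacedEdge H (insert (n, u, a) S) m x y) :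
    PlacedEdge H S m x y ∨
      m = n ∧ ∃ v b, (n, v, b) ∈ S ∧ (H n).Adj u v ∧ (x = a ∧ y = b ∨ x = b ∧ y = a) := by
  obtain ⟨p, q, hp | hp, hq | hq, hpq⟩ := h
  · cases hp; cases hq; exact absurd rfl hpq.ne
  · cases hp; exact .inr ⟨rfl, q, y, hq, hpq, .inl ⟨rfl, rfl⟩⟩
  · cases hq; exact .inr ⟨rfl, p, x, hp, hpq.symm, .inr ⟨rfl, rfl⟩⟩
  · exact .inl ⟨p, q, hp, hq, hpq⟩

theorem IsPartial.insert (hS : IsPartial H S) (hu : ∀ b, (n, u, b) ∉ S) (ha : ∀ v, (n, v, a) ∉ S)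
    (hnew : ∀ m v b, (n, v, b) ∈ S → (H n).Adj u v → ¬ PlacedEdge H S m a b) :
    IsPartial H (insert (n, u, a) S) where
  func m w x y hx hy := by
    rcases hx with hx | hx <;> rcases hy with hy | hy
    · cases hx; cases hy; rfl
    · cases hx; exact absurd hy (hu y)
    · cases hy; exact absurd hx (hu x)
    · exact hS.func hx hy
  inj m w w' x hx hy := by
    rcases hx with hx | hx <;> rcases hy with hy | hy
    · cases hx; cases hy; rfl
    · cases hx; exact absurd hy (ha w')
    · cases hy; exact absurd hx (ha w)
    · exact hS.inj hx hy
  disj m m' x y h₁ h₂ := by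
    rcases placedEdge_insert h₁ with h₁' | ⟨rfl, v, b, hv, huv, hxy⟩ <;>
      rcases placedEdge_insert h₂ with h₂' | ⟨rfl, v', b', hv', huv', hxy'⟩
    · exact hS.disj h₁' h₂'
    · rcases hxy' with ⟨rfl, rfl⟩ | ⟨rfl, rfl⟩
      exacts [(hnew m v' _ hv' huv' h₁').elim, (hnew m v' _ hv' huv' h₁'.symm).elim]
    · rcases hxy with ⟨rfl, rfl⟩ | ⟨rfl, rfl⟩
      exacts [(hnew m' v _ hv huv h₂').elim, (hnew m' v _ hv huv h₂'.symm).elim]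
    · rfl

theorem _root_.Directed.exists_mem_mem {α ι : Type*} {S : ι → Set α} (hdir : Directed (· ⊆ ·) S)
    {x y : α} (hx : x ∈ ⋃ i, S i) (hy : y ∈ ⋃ i, S i) : ∃ i, x ∈ S i ∧ y ∈ S i := by
  obtain ⟨i, hi⟩ := Set.mem_iUnion.1 hx
  obtain ⟨j, hj⟩ := Set.mem_iUnion.1 hy
  obtain ⟨k, hik, hjk⟩ := hdir i j
  exact ⟨k, hik hi, hjk hj⟩

theorem IsPartial.iUnion {ι : Type*} {S : ι → Set (ℕ × ℕ × ℕ)} (hdir : Directed (· ⊆ ·) S)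
    (hS : ∀ i, IsPartial H (S i)) : IsPartial H (⋃ i, S i) := by
  have placed {n a b} (h : PlacedEdge H (⋃ i, S i) n a b) : ∃ i, PlacedEdge H (S i) n a b := by
    obtain ⟨u, v, hu, hv, huv⟩ := h
    obtain ⟨i, hu, hv⟩ := hdir.exists_mem_mem hu hv
    exact ⟨i, u, v, hu, hv, huv⟩
  refine ⟨fun n u a b ha hb => ?_, fun n u v a hu hv => ?_, fun n m a b hn hm => ?_⟩
  · obtain ⟨i, ha, hb⟩ := hdir.exists_mem_mem ha hb
    exact (hS i).func ha hb
  · obtain ⟨i, hu, hv⟩ := hdir.exists_mem_mem hu hv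
    exact (hS i).inj hu hv
  · obtain ⟨i, hi⟩ := placed hn
    obtain ⟨j, hj⟩ := placed hm
    obtain ⟨k, hik, hjk⟩ := hdir i j
    exact (hS k).disj (hi.mono hik) (hj.mono hjk)

end Sets

section Extension

variable {S : Finset (ℕ × ℕ × ℕ)} {n u a b : ℕ}

theorem exists_forall_mem_ne (S : Finset (ℕ × ℕ × ℕ)) (f : ℕ × ℕ × ℕ → ℕ) :
    ∃ k, ∀ t ∈ S, f t ≠ k := by
  obtain ⟨k, hk⟩ := Infinite.exists_notMem_finset (S.image f)
  exact ⟨k, fun t ht h => hk (Finset.mem_image.2 ⟨t, ht, h⟩)⟩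

theorem exists_isPartial_insert_of_unplaced (hS : IsPartial H S) (hu : ∀ a, (n, u, a) ∉ S) :
    ∃ a, IsPartial H ↑(insert (n, u, a) S) := by
  obtain ⟨a, ha⟩ := exists_forall_mem_ne S (·.2.2)
  have ha' (m v) : (m, v, a) ∉ S := fun h => ha _ h rfl
  refine ⟨a, ?_⟩
  rw [Finset.coe_insert]
  exact hS.insert hu (ha' n) fun m _ _ _ _ ⟨_, _, hp, _⟩ => ha' m _ hp

theorem exists_isPartial_insert_of_unhit
    (hdom : ∀ n (D : Set ℕ), IsDominatingSet (H n) D → D.Infinite)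
    (hS : IsPartial H S) (ha : ∀ u, (n, u, a) ∉ S) :
    ∃ u, IsPartial H ↑(insert (n, u, a) S) := by
  set D : Finset ℕ := S.image (·.2.1)
  have hD : ¬ IsDominatingSet (H n) D := fun h => hdom n _ h D.finite_toSet
  obtain ⟨u, huD, hu⟩ : ∃ u ∉ (D : Set ℕ), ∀ d ∈ (D : Set ℕ), ¬ (H n).Adj u d := by
    simpa [IsDominatingSet] using hD
  have hmem {m v b} (h : (m, v, b) ∈ S) : v ∈ D := Finset.mem_image_of_mem _ h
  refine ⟨u, ?_⟩
  rw [Finset.coe_insert]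
  exact hS.insert (fun b h => huD (hmem h)) ha fun m v b hv huv _ => hu v (hmem hv) huv

theorem exists_isPartial_insert_of_uncovered (hne : ∀ n, (H n).edgeSet.Nonempty)
    (hS : IsPartial H S) (hab : a ≠ b) (hfree : ∀ n, ¬ PlacedEdge H S n a b) :
    ∃ n u v, (H n).Adj u v ∧ IsPartial H ↑(insert (n, u, a) (insert (n, v, b) S)) := by
  obtain ⟨n, hn⟩ := exists_forall_mem_ne S (·.1)
  have hn' (w c) : (n, w, c) ∉ S := fun h => hn _ h rfl
  obtain ⟨e, he⟩ := hne n
  induction e using Sym2.ind with | _ u v => ?_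
  have huv : (H n).Adj u v := he
  have hS₁ : IsPartial H (insert (n, v, b) S) :=
    hS.insert (hn' v) (hn' · b) fun _ _ _ h => absurd h (hn' _ _)
  refine ⟨n, u, v, huv, ?_⟩
  push_cast
  refine hS₁.insert ?_ ?_ ?_
  · rintro c (h | h)
    exacts [huv.ne (congrArg (·.2.1) h), hn' u c h]
  · rintro w (h | h)
    exacts [hab (congrArg (·.2.2) h), hn' w a h]
  · rintro m w c (h | h) - hm
    · cases h
      rcases placedEdge_insert hm with hm | ⟨-, w', c', hw', -⟩
      exacts [hfree m hm, hn' w' c' hw']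
    · exact hn' w c h

theorem exists_superset_meets (hne : ∀ n, (H n).edgeSet.Nonempty)
    (hdom : ∀ n (D : Set ℕ), IsDominatingSet (H n) D → D.Infinite) (hS : IsPartial H S) (r) :
    ∃ T : Finset (ℕ × ℕ × ℕ), S ⊆ T ∧ IsPartial H T ∧ Meets H T r := by
  by_cases hr : Meets H S r
  · exact ⟨S, subset_rfl, hS, hr⟩
  match r, hr with
  | .inl (n, u), hr =>
    obtain ⟨a, ha⟩ := exists_isPartial_insert_of_unplaced hS (by simpa [Meets] using hr)
    exact ⟨_, Finset.subset_insert _ _, ha, a, Finset.mem_insert_self _ _⟩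
  | .inr (.inl (n, a)), hr =>
    obtain ⟨u, hu⟩ := exists_isPartial_insert_of_unhit hdom hS (by simpa [Meets] using hr)
    exact ⟨_, Finset.subset_insert _ _, hu, u, Finset.mem_insert_self _ _⟩
  | .inr (.inr (a, b)), hr =>
    simp only [Meets, not_or, not_exists] at hr
    obtain ⟨n, u, v, huv, hT⟩ := exists_isPartial_insert_of_uncovered hne hS hr.1 hr.2
    refine ⟨_, (Finset.subset_insert _ _).trans (Finset.subset_insert _ _), hT, .inr ?_⟩
    exact ⟨n, u, v, by simp, by simp, huv⟩

end Extension

theorem exists_isPartial_forall_meets (hne : ∀ n, (H n).edgeSet.Nonempty)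
    (hdom : ∀ n (D : Set ℕ), IsDominatingSet (H n) D → D.Infinite) :
    ∃ L, IsPartial H L ∧ ∀ r, Meets H L r := by
  let 𝒟 (r) : Order.Cofinal {S : Finset (ℕ × ℕ × ℕ) // IsPartial H S} :=
    ⟨{S | Meets H S.1 r}, fun S =>
      let ⟨T, hST, hT, hr⟩ := exists_superset_meets hne hdom S.2 r
      ⟨⟨T, hT⟩, hr, hST⟩⟩
  let seq := Order.sequenceOfCofinals ⟨∅, by simpa using isPartial_empty H⟩ 𝒟
  have hmono : Monotone fun k => ((seq k).1 : Set (ℕ × ℕ × ℕ)) := fun _ _ h =>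
    Finset.coe_subset.2 (Order.sequenceOfCofinals.monotone _ 𝒟 h)
  exact ⟨⋃ k, (seq k).1, IsPartial.iUnion hmono.directed_le fun k => (seq k).2,
    fun r => (Order.sequenceOfCofinals.encode_mem _ 𝒟 r).mono
      (Set.subset_iUnion (fun k => ((seq k).1 : Set (ℕ × ℕ × ℕ))) _)⟩

theorem exists_factorization_of_forall_meets {L : Set (ℕ × ℕ × ℕ)} (hL : IsPartial H L)
    (hmeets : ∀ r, Meets H L r) :
    ∃ G : ℕ → SimpleGraph ℕ, IsFactorization (⊤ : SimpleGraph ℕ) G ∧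
      ∀ n, Nonempty (H n ≃g G n) := by
  choose f hf using fun n u => (hmeets (.inl (n, u)) : ∃ a, (n, u, a) ∈ L)
  have hf_eq {n u a} (h : (n, u, a) ∈ L) : f n u = a := hL.func (hf n u) h
  have hbij (n) : Function.Bijective (f n) :=
    ⟨fun u v h => hL.inj (hf n u) (h ▸ hf n v),
      fun a => let ⟨u, hu⟩ := (hmeets (.inr (.inl (n, a))) : ∃ u, (n, u, a) ∈ L); ⟨u, hf_eq hu⟩⟩
  let e (n) := Equiv.ofBijective (f n) (hbij n)
  have hadj (n a b) : ((H n).map (e n).toEmbedding).Adj a b ↔ PlacedEdge H L n a b := by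
    rw [map_adj]
    constructor
    · rintro ⟨u, v, huv, rfl, rfl⟩
      exact ⟨u, v, hf n u, hf n v, huv⟩
    · rintro ⟨u, v, hu, hv, huv⟩
      exact ⟨u, v, huv, hf_eq hu, hf_eq hv⟩
  refine ⟨fun n => (H n).map (e n).toEmbedding, ⟨fun _ => le_top, ?_⟩,
    fun n => ⟨Iso.map (e n) (H n)⟩⟩
  intro x hx
  induction x using Sym2.ind with | _ a b => ?_
  obtain hab | ⟨n, hn⟩ := (hmeets (.inr (.inr (a, b))) : a = b ∨ ∃ n, PlacedEdge H L n a b)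
  · exact absurd hab hx
  · exact ⟨n, (hadj n a b).2 hn, fun m hm => hL.disj ((hadj m a b).1 hm) hn⟩

theorem exists_factorization_top (hne : ∀ n, (H n).edgeSet.Nonempty)
    (hdom : ∀ n (D : Set ℕ), IsDominatingSet (H n) D → D.Infinite) :
    ∃ G : ℕ → SimpleGraph ℕ, IsFactorization (⊤ : SimpleGraph ℕ) G ∧
      ∀ n, Nonempty (H n ≃g G n) :=
  let ⟨_, hL, hmeets⟩ := exists_isPartial_forall_meets hne hdom
  exists_factorization_of_forall_meets hL hmeets

end Packing

theorem IsDominatingSet.image {V W : Type*} {G : SimpleGraph V} {G' : SimpleGraph W}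
    (e : G ≃g G') {D : Set V} (hD : IsDominatingSet G D) : IsDominatingSet G' (e '' D) := by
  intro w hw
  obtain ⟨d, hd, hadj⟩ := hD (e.symm w) fun h => hw ⟨_, h, e.apply_symm_apply w⟩
  exact ⟨e d, Set.mem_image_of_mem e hd, by simpa using e.map_adj_iff.2 hadj⟩

/-- if `𝓕` is a countable family of countable (non-empty) graphs each
of which has infinite domination number, then `FP(𝓕)` has a solution: there is a
factorization of the complete graph `K_ℕ` into graphs `G n` with `G n ≅ F n`. -/
theorem stmt_7 (V : ℕ → Type) [∀ n, Countable (V n)]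
    (F : ∀ n, SimpleGraph (V n)) (hne : ∀ n, (F n).edgeSet.Nonempty)
    (hdom : ∀ n (D : Set (V n)), IsDominatingSet (F n) D → D.Infinite) :
    ∃ G : ℕ → SimpleGraph ℕ, IsFactorization (⊤ : SimpleGraph ℕ) G ∧
      ∀ n, Nonempty (F n ≃g G n) := by
  have e (n) : V n ≃ ℕ := by
    have : Infinite (V n) := Set.infinite_univ_iff.1 (hdom n _ fun v hv => absurd trivial hv)
    exact (nonempty_denumerable (V n)).some.eqv
  let H (n) : SimpleGraph ℕ := (F n).map (e n).toEmbedding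
  let i (n) : F n ≃g H n := SimpleGraph.Iso.map (e n) (F n)
  obtain ⟨G, hG, hiso⟩ := Packing.exists_factorization_top (H := H)
    (fun n => let ⟨x, hx⟩ := hne n; ⟨_, ((i n).mapEdgeSet ⟨x, hx⟩).2⟩)
    (fun n D hD => (hdom n _ (hD.image (i n).symm)).of_image _)
  exact ⟨G, hG, fun n => (hiso n).map (i n).trans⟩
end

section
/- Let ℵ be an infinite cardinal. Any two simple graphs of order ℵ that satisfy property ⋆_ℵ are isomorphic. -/
universe u

/-- Property `⋆_ℵ`: for every two disjoint sets of vertices `U` and `W`, each of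
cardinality less than `ℵ`, there is a vertex `z` adjacent to every vertex of `U`
and to no vertex of `W`. -/
def StarProp {V : Type u} (ℵ : Cardinal.{u}) (G : SimpleGraph V) : Prop :=
  ∀ U W : Set V, Disjoint U W → Cardinal.mk ↥U < ℵ → Cardinal.mk ↥W < ℵ →
    ∃ z : V, (∀ u ∈ U, G.Adj z u) ∧ ∀ w ∈ W, ¬ G.Adj z w

namespace Stmt8Aux

open Cardinal Set

attribute [local instance] Classical.propDecidable

variable {V W : Type u} (ℵ : Cardinal.{u}) (G : SimpleGraph V) (H : SimpleGraph W)

/-- Strengthened star property: the witness can be chosen outside `U ∪ B`. -/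
lemma star_avoid (hℵ : Cardinal.aleph0 ≤ ℵ) (hH : StarProp ℵ H) {U B : Set W}
    (hd : Disjoint U B) (hU : #U < ℵ) (hB : #B < ℵ) :
    ∃ z, (∀ u ∈ U, H.Adj z u) ∧ (∀ w ∈ B, ¬H.Adj z w) ∧ z ∉ U ∪ B := by
  obtain ⟨t, ht, -⟩ := hH (U ∪ B) ∅ (disjoint_empty _)
    (lt_of_le_of_lt (mk_union_le _ _) (Cardinal.add_lt_of_lt hℵ hU hB))
    (by simpa using aleph0_pos.trans_le hℵ)
  have htUB : t ∉ U ∪ B := fun h => H.irrefl (ht t h)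
  obtain ⟨z, hz1, hz2⟩ := hH U (insert t B)
    (by
      rw [Set.disjoint_left]
      intro x hxU hx
      rcases hx with h | h
      · exact htUB (h ▸ Or.inl hxU)
      · exact (Set.disjoint_left.mp hd hxU) h)
    hU
    (lt_of_le_of_lt Cardinal.mk_insert_le
      (Cardinal.add_lt_of_lt hℵ hB (Cardinal.one_lt_aleph0.trans_le hℵ)))
  refine ⟨z, hz1, fun w hw => hz2 w (Set.mem_insert_of_mem _ hw), fun hz => ?_⟩
  exact hz2 t (Set.mem_insert _ _) ((H.adj_comm _ _).mp (ht z hz))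

/-- The witness choice function. -/
noncomputable def pickZ [Nonempty W] (U B : Set W) : W :=
  if h : ∃ z, (∀ u ∈ U, H.Adj z u) ∧ (∀ w ∈ B, ¬H.Adj z w) ∧ z ∉ U ∪ B then h.choose
  else Classical.arbitrary W

lemma pickZ_spec [Nonempty W] (hℵ : Cardinal.aleph0 ≤ ℵ) (hH : StarProp ℵ H) {U B : Set W}
    (hd : Disjoint U B) (hU : #U < ℵ) (hB : #B < ℵ) :
    (∀ u ∈ U, H.Adj (pickZ H U B) u) ∧ (∀ w ∈ B, ¬H.Adj (pickZ H U B) w) ∧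
      pickZ H U B ∉ U ∪ B := by
  have h := star_avoid ℵ H hℵ hH hd hU hB
  rw [pickZ, dif_pos h]
  exact h.choose_spec

/-- Compatibility of two pairs of a partial isomorphism. -/
def Compat (p q : V × W) : Prop :=
  (p.1 = q.1 ↔ p.2 = q.2) ∧ (G.Adj p.1 q.1 ↔ H.Adj p.2 q.2)

/-- A set of pairs is a partial isomorphism. -/
def Good (S : Set (V × W)) : Prop := ∀ p ∈ S, ∀ q ∈ S, Compat G H p q

lemma compat_self (p : V × W) : Compat G H p p :=
  ⟨iff_of_true rfl rfl, iff_of_false (G.irrefl) (H.irrefl)⟩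

lemma Compat.symm {p q : V × W} (h : Compat G H p q) : Compat G H q p := by
  obtain ⟨h1, h2⟩ := h
  constructor
  · rw [eq_comm, h1, eq_comm]
  · rw [G.adj_comm, h2, H.adj_comm]

/-- Extend a partial isomorphism to cover `a : V`. -/
noncomputable def ext1 [Nonempty W] (S : Set (V × W)) (a : V) : V × W :=
  if h : ∃ p ∈ S, p.1 = a then h.choose
  else (a, pickZ H {w | ∃ v, (v, w) ∈ S ∧ G.Adj v a}
    {w | (∃ v, (v, w) ∈ S) ∧ ¬∃ v, (v, w) ∈ S ∧ G.Adj v a})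

/-- Extend a partial isomorphism to cover `b : W`. -/
noncomputable def ext2 [Nonempty V] (S : Set (V × W)) (b : W) : V × W :=
  if h : ∃ p ∈ S, p.2 = b then h.choose
  else (pickZ G {v | ∃ w, (v, w) ∈ S ∧ H.Adj w b}
    {v | (∃ w, (v, w) ∈ S) ∧ ¬∃ w, (v, w) ∈ S ∧ H.Adj w b}, b)

lemma ext1_fst [Nonempty W] (S : Set (V × W)) (a : V) : (ext1 G H S a).1 = a := by
  rw [ext1]
  split
  · next h => exact h.choose_spec.2
  · rfl

lemma ext2_snd [Nonempty V] (S : Set (V × W)) (b : W) : (ext2 G H S b).2 = b := by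
  rw [ext2]
  split
  · next h => exact h.choose_spec.2
  · rfl

lemma ext1_good [Nonempty W] (hℵ : Cardinal.aleph0 ≤ ℵ) (hH : StarProp ℵ H)
    {S : Set (V × W)} (hS : Good G H S) (hcard : #S < ℵ) (a : V) :
    Good G H (insert (ext1 G H S a) S) := by
  rw [ext1]
  split
  · next h =>
    rw [Set.insert_eq_self.mpr h.choose_spec.1]
    exact hS
  · next h =>
    push_neg at h
    set U : Set W := {w | ∃ v, (v, w) ∈ S ∧ G.Adj v a} with hU
    set B : Set W := {w | (∃ v, (v, w) ∈ S) ∧ ¬∃ v, (v, w) ∈ S ∧ G.Adj v a} with hB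
    have hsub : U ⊆ Prod.snd '' S := by
      rintro w ⟨v, hv, -⟩; exact ⟨(v, w), hv, rfl⟩
    have hsub' : B ⊆ Prod.snd '' S := by
      rintro w ⟨⟨v, hv⟩, -⟩; exact ⟨(v, w), hv, rfl⟩
    have himg : #(Prod.snd '' S) < ℵ := lt_of_le_of_lt (Cardinal.mk_image_le) hcard
    have hUc : #U < ℵ := lt_of_le_of_lt (Cardinal.mk_le_mk_of_subset hsub) himg
    have hBc : #B < ℵ := lt_of_le_of_lt (Cardinal.mk_le_mk_of_subset hsub') himg
    have hd : Disjoint U B := by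
      rw [Set.disjoint_left]
      rintro w hw ⟨-, hw2⟩
      exact hw2 hw
    obtain ⟨hz1, hz2, hz3⟩ := pickZ_spec ℵ H hℵ hH hd hUc hBc
    set z := pickZ H U B with hz
    -- z is not a second coordinate of anything in S
    have hznot : ∀ q ∈ S, z ≠ q.2 := by
      intro q hq hzq
      apply hz3
      by_cases hadj : ∃ v, (v, q.2) ∈ S ∧ G.Adj v a
      · exact hzq ▸ Or.inl hadj
      · exact hzq ▸ Or.inr ⟨⟨q.1, hq⟩, hadj⟩
    have key : ∀ q ∈ S, Compat G H (a, z) q := by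
      intro q hq
      constructor
      · refine iff_of_false (fun hh => h q hq hh.symm) (fun hh => hznot q hq hh)
      · constructor
        · intro hadj
          exact hz1 q.2 ⟨q.1, hq, (G.adj_comm _ _).mp hadj⟩
        · intro hadj
          by_contra hna
          have hqB : q.2 ∈ B := by
            refine ⟨⟨q.1, hq⟩, ?_⟩
            rintro ⟨v, hv, hva⟩
            have hc : Compat G H (v, q.2) q := hS _ hv _ hq
            have : v = q.1 := hc.1.mpr rfl
            exact hna ((G.adj_comm _ _).mp (this ▸ hva))
          exact hz2 q.2 hqB hadj
    intro p hp q hq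
    rcases hp with hp | hp <;> rcases hq with hq | hq
    · rw [hp, hq]; exact compat_self G H _
    · rw [hp]; exact key q hq
    · rw [hq]; exact (key p hp).symm G H
    · exact hS p hp q hq

lemma ext2_good [Nonempty V] (hℵ : Cardinal.aleph0 ≤ ℵ) (hG : StarProp ℵ G)
    {S : Set (V × W)} (hS : Good G H S) (hcard : #S < ℵ) (b : W) :
    Good G H (insert (ext2 G H S b) S) := by
  rw [ext2]
  split
  · next h =>
    rw [Set.insert_eq_self.mpr h.choose_spec.1]
    exact hS
  · next h =>
    push_neg at h
    set U : Set V := {v | ∃ w, (v, w) ∈ S ∧ H.Adj w b} with hU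
    set B : Set V := {v | (∃ w, (v, w) ∈ S) ∧ ¬∃ w, (v, w) ∈ S ∧ H.Adj w b} with hB
    have hsub : U ⊆ Prod.fst '' S := by
      rintro v ⟨w, hw, -⟩; exact ⟨(v, w), hw, rfl⟩
    have hsub' : B ⊆ Prod.fst '' S := by
      rintro v ⟨⟨w, hw⟩, -⟩; exact ⟨(v, w), hw, rfl⟩
    have himg : #(Prod.fst '' S) < ℵ := lt_of_le_of_lt (Cardinal.mk_image_le) hcard
    have hUc : #U < ℵ := lt_of_le_of_lt (Cardinal.mk_le_mk_of_subset hsub) himg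
    have hBc : #B < ℵ := lt_of_le_of_lt (Cardinal.mk_le_mk_of_subset hsub') himg
    have hd : Disjoint U B := by
      rw [Set.disjoint_left]
      rintro v hv ⟨-, hv2⟩
      exact hv2 hv
    obtain ⟨hz1, hz2, hz3⟩ := pickZ_spec ℵ G hℵ hG hd hUc hBc
    set z := pickZ G U B with hz
    have hznot : ∀ q ∈ S, z ≠ q.1 := by
      intro q hq hzq
      apply hz3
      by_cases hadj : ∃ w, (q.1, w) ∈ S ∧ H.Adj w b
      · exact hzq ▸ Or.inl hadj
      · exact hzq ▸ Or.inr ⟨⟨q.2, hq⟩, hadj⟩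
    have key : ∀ q ∈ S, Compat G H (z, b) q := by
      intro q hq
      constructor
      · refine iff_of_false (fun hh => hznot q hq hh) (fun hh => h q hq hh.symm)
      · constructor
        · intro hadj
          by_contra hna
          have hqB : q.1 ∈ B := by
            refine ⟨⟨q.2, hq⟩, ?_⟩
            rintro ⟨w, hw, hwb⟩
            have hc : Compat G H (q.1, w) q := hS _ hw _ hq
            have : w = q.2 := hc.1.mp rfl
            exact hna ((H.adj_comm _ _).mp (this ▸ hwb))
          exact hz2 q.1 hqB hadj
        · intro hadj
          exact hz1 q.1 ⟨q.2, hq, (H.adj_comm _ _).mp hadj⟩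
    intro p hp q hq
    rcases hp with hp | hp <;> rcases hq with hq | hq
    · rw [hp, hq]; exact compat_self G H _
    · rw [hp]; exact key q hq
    · rw [hq]; exact (key p hp).symm G H
    · exact hS p hp q hq

/-- One step of the back-and-forth: add pairs covering `a` and `b`. -/
noncomputable def body [Nonempty V] [Nonempty W] (S : Set (V × W)) (a : V) (b : W) :
    (V × W) × (V × W) :=
  (ext1 G H S a, ext2 G H (insert (ext1 G H S a) S) b)

section Main

variable [Nonempty V] [Nonempty W] (eV : ℵ.ord.ToType ≃ V) (eW : ℵ.ord.ToType ≃ W)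

/-- The transfinite back-and-forth construction. -/
noncomputable def step : ℵ.ord.ToType → (V × W) × (V × W) :=
  WellFounded.fix wellFounded_lt fun i rec =>
    body G H
      ((fun j : {j // j < i} => (rec j.1 j.2).1) '' Set.univ ∪
        (fun j : {j // j < i} => (rec j.1 j.2).2) '' Set.univ)
      (eV i) (eW i)

/-- The pairs accumulated before stage `i`. -/
def Sset (i : ℵ.ord.ToType) : Set (V × W) :=
  (fun j => (step ℵ G H eV eW j).1) '' Set.Iio i ∪
    (fun j => (step ℵ G H eV eW j).2) '' Set.Iio i

lemma step_eq (i : ℵ.ord.ToType) :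
    step ℵ G H eV eW i = body G H (Sset ℵ G H eV eW i) (eV i) (eW i) := by
  rw [step, WellFounded.fix_eq]
  congr 1
  rw [Sset]
  congr 1 <;>
  · ext p
    constructor
    · rintro ⟨⟨j, hj⟩, -, rfl⟩
      exact ⟨j, hj, rfl⟩
    · rintro ⟨j, hj, rfl⟩
      exact ⟨⟨j, hj⟩, trivial, rfl⟩

lemma Sset_card (hℵ : Cardinal.aleph0 ≤ ℵ) (i : ℵ.ord.ToType) :
    #(Sset ℵ G H eV eW i) < ℵ := by
  have h : #(Set.Iio i) < ℵ := Cardinal.mk_Iio_ord_toType i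
  exact lt_of_le_of_lt (mk_union_le _ _)
    (Cardinal.add_lt_of_lt hℵ (lt_of_le_of_lt Cardinal.mk_image_le h)
      (lt_of_le_of_lt Cardinal.mk_image_le h))

/-- The pairs accumulated through stage `i` (inclusive). -/
def Tset (i : ℵ.ord.ToType) : Set (V × W) :=
  insert (step ℵ G H eV eW i).1 (insert (step ℵ G H eV eW i).2 (Sset ℵ G H eV eW i))

lemma T_subset_S {i j : ℵ.ord.ToType} (hij : i < j) :
    Tset ℵ G H eV eW i ⊆ Sset ℵ G H eV eW j := by
  rintro p (rfl | rfl | hp)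
  · exact Or.inl ⟨i, hij, rfl⟩
  · exact Or.inr ⟨i, hij, rfl⟩
  · rcases hp with ⟨k, hk, rfl⟩ | ⟨k, hk, rfl⟩
    · exact Or.inl ⟨k, hk.trans hij, rfl⟩
    · exact Or.inr ⟨k, hk.trans hij, rfl⟩

lemma good_T (hℵ : Cardinal.aleph0 ≤ ℵ) (hG : StarProp ℵ G) (hH : StarProp ℵ H)
    (i : ℵ.ord.ToType) : Good G H (Tset ℵ G H eV eW i) := by
  induction i using WellFoundedLT.induction with
  | ind i IH =>
    have hgoodS : Good G H (Sset ℵ G H eV eW i) := by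
      rintro p hp q hq
      have hmem : ∀ r ∈ Sset ℵ G H eV eW i, ∃ k, k < i ∧ r ∈ Tset ℵ G H eV eW k := by
        rintro r (⟨k, hk, rfl⟩ | ⟨k, hk, rfl⟩)
        · exact ⟨k, hk, Or.inl rfl⟩
        · exact ⟨k, hk, Or.inr (Or.inl rfl)⟩
      obtain ⟨k₁, hk₁, hp'⟩ := hmem p hp
      obtain ⟨k₂, hk₂, hq'⟩ := hmem q hq
      rcases lt_trichotomy k₁ k₂ with h | rfl | h
      · exact IH k₂ hk₂ p (Or.inr (Or.inr (T_subset_S ℵ G H eV eW h hp'))) q hq'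
      · exact IH k₁ hk₁ p hp' q hq'
      · exact IH k₁ hk₁ p hp' q (Or.inr (Or.inr (T_subset_S ℵ G H eV eW h hq')))
    have hcard := Sset_card ℵ G H eV eW hℵ i
    have h1 : Good G H (insert (ext1 G H (Sset ℵ G H eV eW i) (eV i)) (Sset ℵ G H eV eW i)) :=
      ext1_good ℵ G H hℵ hH hgoodS hcard (eV i)
    have hcard1 : #(insert (ext1 G H (Sset ℵ G H eV eW i) (eV i)) (Sset ℵ G H eV eW i) :
        Set (V × W)) < ℵ :=
      lt_of_le_of_lt Cardinal.mk_insert_le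
        (Cardinal.add_lt_of_lt hℵ hcard (Cardinal.one_lt_aleph0.trans_le hℵ))
    have h2 := ext2_good ℵ G H hℵ hG h1 hcard1 (eW i)
    have hT : Tset ℵ G H eV eW i ⊆
        insert (ext2 G H (insert (ext1 G H (Sset ℵ G H eV eW i) (eV i))
          (Sset ℵ G H eV eW i)) (eW i))
        (insert (ext1 G H (Sset ℵ G H eV eW i) (eV i)) (Sset ℵ G H eV eW i)) := by
      rintro p (rfl | rfl | hp)
      · rw [step_eq]
        exact Or.inr (Or.inl rfl)
      · rw [step_eq]
        exact Or.inl rfl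
      · exact Or.inr (Or.inr hp)
    intro p hp q hq
    exact h2 p (hT hp) q (hT hq)

/-- The full relation. -/
def Rel : Set (V × W) :=
  {p | ∃ i, p = (step ℵ G H eV eW i).1 ∨ p = (step ℵ G H eV eW i).2}

lemma good_R (hℵ : Cardinal.aleph0 ≤ ℵ) (hG : StarProp ℵ G) (hH : StarProp ℵ H) :
    Good G H (Rel ℵ G H eV eW) := by
  have hmem : ∀ p ∈ Rel ℵ G H eV eW, ∀ j, (∃ i, i ≤ j ∧
      (p = (step ℵ G H eV eW i).1 ∨ p = (step ℵ G H eV eW i).2)) →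
      p ∈ Tset ℵ G H eV eW j := by
    rintro p - j ⟨i, hij, hp⟩
    rcases eq_or_lt_of_le hij with rfl | hij
    · rcases hp with rfl | rfl
      · exact Or.inl rfl
      · exact Or.inr (Or.inl rfl)
    · refine Or.inr (Or.inr ?_)
      rcases hp with rfl | rfl
      · exact Or.inl ⟨i, hij, rfl⟩
      · exact Or.inr ⟨i, hij, rfl⟩
  rintro p hp q hq
  obtain ⟨i, hi⟩ := hp
  obtain ⟨j, hj⟩ := hq
  rcases le_total i j with h | h
  · exact good_T ℵ G H eV eW hℵ hG hH j p
      (hmem p ⟨i, hi⟩ j ⟨i, h, hi⟩) q (hmem q ⟨j, hj⟩ j ⟨j, le_refl j, hj⟩)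
  · exact good_T ℵ G H eV eW hℵ hG hH i p
      (hmem p ⟨i, hi⟩ i ⟨i, le_refl i, hi⟩) q (hmem q ⟨j, hj⟩ i ⟨j, h, hj⟩)

lemma fst_covers (v : V) :
    ((step ℵ G H eV eW (eV.symm v)).1).1 = v := by
  rw [step_eq]
  show (ext1 G H _ (eV (eV.symm v))).1 = v
  rw [ext1_fst, Equiv.apply_symm_apply]

lemma snd_covers (w : W) :
    ((step ℵ G H eV eW (eW.symm w)).2).2 = w := by
  rw [step_eq]
  show (ext2 G H _ (eW (eW.symm w))).2 = w
  rw [ext2_snd, Equiv.apply_symm_apply]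

end Main

end Stmt8Aux

/-- any two simple graphs of infinite order `ℵ` satisfying property
`⋆_ℵ` are isomorphic. -/
theorem stmt_8 (ℵ : Cardinal.{u}) (hℵ : Cardinal.aleph0 ≤ ℵ)
    {V W : Type u} (hV : Cardinal.mk V = ℵ) (hW : Cardinal.mk W = ℵ)
    (G : SimpleGraph V) (H : SimpleGraph W)
    (hG : StarProp ℵ G) (hH : StarProp ℵ H) :
    Nonempty (G ≃g H) := by
  classical
  open Stmt8Aux in
  have hα : Cardinal.mk ℵ.ord.ToType = ℵ := by
    rw [Cardinal.mk_toType, Cardinal.card_ord]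
  have hne : ℵ ≠ 0 := (Cardinal.aleph0_pos.trans_le hℵ).ne'
  have : Nonempty V := Cardinal.mk_ne_zero_iff.mp (hV ▸ hne)
  have : Nonempty W := Cardinal.mk_ne_zero_iff.mp (hW ▸ hne)
  obtain ⟨eV⟩ : Nonempty (ℵ.ord.ToType ≃ V) := Cardinal.eq.mp (hα.trans hV.symm)
  obtain ⟨eW⟩ : Nonempty (ℵ.ord.ToType ≃ W) := Cardinal.eq.mp (hα.trans hW.symm)
  have hgood := Stmt8Aux.good_R ℵ G H eV eW hℵ hG hH
  set f : V → W := fun v => ((Stmt8Aux.step ℵ G H eV eW (eV.symm v)).1).2 with hf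
  set g : W → V := fun w => ((Stmt8Aux.step ℵ G H eV eW (eW.symm w)).2).1 with hg
  have hpR : ∀ v : V, (Stmt8Aux.step ℵ G H eV eW (eV.symm v)).1 ∈ Stmt8Aux.Rel ℵ G H eV eW :=
    fun v => ⟨eV.symm v, Or.inl rfl⟩
  have hqR : ∀ w : W, (Stmt8Aux.step ℵ G H eV eW (eW.symm w)).2 ∈ Stmt8Aux.Rel ℵ G H eV eW :=
    fun w => ⟨eW.symm w, Or.inr rfl⟩
  have hleft : Function.LeftInverse g f := by
    intro v
    have hc := hgood _ (hqR (f v)) _ (hpR v)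
    have h2 : ((Stmt8Aux.step ℵ G H eV eW (eW.symm (f v))).2).2 =
        ((Stmt8Aux.step ℵ G H eV eW (eV.symm v)).1).2 :=
      Stmt8Aux.snd_covers ℵ G H eV eW (f v)
    have h1 := hc.1.mpr h2
    rw [Stmt8Aux.fst_covers ℵ G H eV eW v] at h1
    exact h1
  have hright : Function.RightInverse g f := by
    intro w
    have hc := hgood _ (hpR (g w)) _ (hqR w)
    have h1 : ((Stmt8Aux.step ℵ G H eV eW (eV.symm (g w))).1).1 =
        ((Stmt8Aux.step ℵ G H eV eW (eW.symm w)).2).1 :=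
      Stmt8Aux.fst_covers ℵ G H eV eW (g w)
    have h2 := hc.1.mp h1
    rw [Stmt8Aux.snd_covers ℵ G H eV eW w] at h2
    exact h2
  have hadj : ∀ a b : V, H.Adj (f a) (f b) ↔ G.Adj a b := by
    intro a b
    have hc := hgood _ (hpR a) _ (hpR b)
    have := hc.2
    rw [Stmt8Aux.fst_covers ℵ G H eV eW a, Stmt8Aux.fst_covers ℵ G H eV eW b] at this
    exact this.symm
  exact ⟨⟨⟨f, g, hleft, hright⟩, hadj _ _⟩⟩
end

section
/- Let ℵ be an infinite cardinal, let F be a graph of order ℵ with no dominating set of cardinality less than ℵ, let Θ be an ℵ-small subgraph of the complete graph K_ℵ, and let σ: G → Γ be an embedding in Σ_ℵ(F, K_ℵ \ Θ). Then: (1) for every vertex v of F there exists an embedding σ': G' → Γ' in Σ_ℵ(F, K_ℵ \ Θ) with |V(G')| ≤ |V(G)| + 1, σ ≤ σ', and v ∈ V(G'); and (2) for every vertex x of K_ℵ there exists an embedding σ'': G'' → Γ'' in Σ_ℵ(F, K_ℵ \ Θ) with |V(G'')| ≤ |V(G)| + 1, σ ≤ σ'', and x ∈ V(Γ''). -/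
universe u

/-- An element of `Σ_ℵ(F, Λ)`: a graph embedding of an induced `ℵ`-small subgraph
of `F` (the one induced on `dom`) onto a subgraph of `Λ` (its image). -/
structure PartialEmb {V X : Type u} (ℵ : Cardinal.{u})
    (F : SimpleGraph V) (Λ : SimpleGraph X) : Type u where
  /-- the vertex set of the induced subgraph of `F` being embedded -/
  dom : Set V
  /-- the underlying vertex map -/
  toFun : V → X
  /-- the domain is `ℵ`-small -/
  small : Cardinal.mk ↥dom < ℵ
  /-- the map is injective on the domain -/
  injOn : Set.InjOn toFun dom
  /-- edges of the induced subgraph are sent to edges of `Λ`, so that the image of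
  the induced subgraph on `dom` is a subgraph of `Λ` -/
  adjMap : ∀ a ∈ dom, ∀ b ∈ dom, F.Adj a b → Λ.Adj (toFun a) (toFun b)

/-- The extension order on `Σ_ℵ(F, Λ)`: `σ ≤ σ'` iff `σ'` extends `σ`. -/
def PartialEmb.le {V X : Type u} {ℵ : Cardinal.{u}}
    {F : SimpleGraph V} {Λ : SimpleGraph X}
    (σ σ' : PartialEmb ℵ F Λ) : Prop :=
  σ.dom ⊆ σ'.dom ∧ Set.EqOn σ.toFun σ'.toFun σ.dom

/-!
Both parts are one-point extensions `σ ∪ {v ↦ x}`, which are again embeddings as soon as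
`v` is new, `x` is new, and `x` is `Λ`-adjacent to the images of the `F`-neighbours of `v`.
For (1) take any `x` outside the `ℵ`-small set `V(Θ) ∪ σ(V(G))`: in `K_ℵ \ Θ` it is adjacent
to every other vertex of `σ(V(G))`. For (2) take any `v` outside `V(G)` with no neighbour in
`V(G)`, which exists because the `ℵ`-small set `V(G)` is not dominating.
-/

open Cardinal

namespace PartialEmb

variable {V X : Type u} {ℵ : Cardinal.{u}} {F : SimpleGraph V} {Λ : SimpleGraph X}

theorem le_refl (σ : PartialEmb ℵ F Λ) : σ.le σ :=
  ⟨subset_rfl, fun _ _ => rfl⟩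

section Extend

variable [DecidableEq V] (hℵ : ℵ₀ ≤ ℵ) (σ : PartialEmb ℵ F Λ) {v : V} {x : X}
  (hv : v ∉ σ.dom) (hx : x ∉ σ.toFun '' σ.dom)
  (hadj : ∀ b ∈ σ.dom, F.Adj v b → Λ.Adj x (σ.toFun b))

def extend : PartialEmb ℵ F Λ where
  dom := insert v σ.dom
  toFun := Function.update σ.toFun v x
  small := mk_insert_le.trans_lt <|
    add_lt_of_lt hℵ σ.small (one_lt_aleph0.trans_le hℵ)
  injOn := by
    have hσ : Set.EqOn σ.toFun (Function.update σ.toFun v x) σ.dom := fun a ha =>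
      (Function.update_of_ne (ne_of_mem_of_not_mem ha hv) _ _).symm
    rw [Set.injOn_insert hv, ← hσ.injOn_iff, ← hσ.image_eq, Function.update_self]
    exact ⟨σ.injOn, hx⟩
  adjMap := by
    have hupd : ∀ a ∈ σ.dom, Function.update σ.toFun v x a = σ.toFun a := fun a ha =>
      Function.update_of_ne (ne_of_mem_of_not_mem ha hv) _ _
    rintro a (rfl | ha) b (rfl | hb) hab
    · exact absurd hab (F.loopless.irrefl _)
    · rw [Function.update_self, hupd b hb]
      exact hadj b hb hab
    · rw [Function.update_self, hupd a ha]
      exact (hadj a ha hab.symm).symm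
    · rw [hupd a ha, hupd b hb]
      exact σ.adjMap a ha b hb hab

theorem le_extend : σ.le (σ.extend hℵ hv hx hadj) :=
  ⟨Set.subset_insert _ _, fun _ ha =>
    (Function.update_of_ne (ne_of_mem_of_not_mem ha hv) _ _).symm⟩

theorem mk_dom_extend_le : #(σ.extend hℵ hv hx hadj).dom ≤ #σ.dom + 1 :=
  mk_insert_le

theorem mem_dom_extend : v ∈ (σ.extend hℵ hv hx hadj).dom :=
  Set.mem_insert _ _

theorem extend_apply_self : (σ.extend hℵ hv hx hadj).toFun v = x :=
  Function.update_self _ _ _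

end Extend

theorem exists_le_mem_image_of_not_dominating (hℵ : ℵ₀ ≤ ℵ) (σ : PartialEmb ℵ F Λ)
    (hσ : ¬ IsDominatingSet F σ.dom) (x : X) :
    ∃ σ' : PartialEmb ℵ F Λ, #σ'.dom ≤ #σ.dom + 1 ∧ σ.le σ' ∧ x ∈ σ'.toFun '' σ'.dom := by
  classical
  by_cases hx : x ∈ σ.toFun '' σ.dom
  · exact ⟨σ, le_self_add, σ.le_refl, hx⟩
  obtain ⟨v, hv, hv_nadj⟩ : ∃ v ∉ σ.dom, ∀ b ∈ σ.dom, ¬ F.Adj v b := by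
    simpa [IsDominatingSet] using hσ
  have hadj : ∀ b ∈ σ.dom, F.Adj v b → Λ.Adj x (σ.toFun b) := fun b hb hvb =>
    absurd hvb (hv_nadj b hb)
  exact ⟨σ.extend hℵ hv hx hadj, σ.mk_dom_extend_le hℵ hv hx hadj, σ.le_extend hℵ hv hx hadj,
    ⟨v, σ.mem_dom_extend hℵ hv hx hadj, σ.extend_apply_self hℵ hv hx hadj⟩⟩

end PartialEmb

theorem SimpleGraph.Subgraph.top_sdiff_spanningCoe_adj_of_notMem_verts {X : Type*}
    {Θ : (⊤ : SimpleGraph X).Subgraph} {x y : X} (hx : x ∉ Θ.verts) (hxy : x ≠ y) :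
    ((⊤ : SimpleGraph X) \ Θ.spanningCoe).Adj x y :=
  ⟨hxy, fun h => hx h.fst_mem⟩

namespace PartialEmb

variable {V X : Type u} {ℵ : Cardinal.{u}} {F : SimpleGraph V}

theorem exists_le_mem_dom_of_top_sdiff (hℵ : ℵ₀ ≤ ℵ) (hX : #X = ℵ)
    {Θ : (⊤ : SimpleGraph X).Subgraph} (hΘ : #Θ.verts < ℵ)
    (σ : PartialEmb ℵ F ((⊤ : SimpleGraph X) \ Θ.spanningCoe)) (v : V) :
    ∃ σ' : PartialEmb ℵ F ((⊤ : SimpleGraph X) \ Θ.spanningCoe),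
      #σ'.dom ≤ #σ.dom + 1 ∧ σ.le σ' ∧ v ∈ σ'.dom := by
  classical
  by_cases hv : v ∈ σ.dom
  · exact ⟨σ, le_self_add, σ.le_refl, hv⟩
  have hsmall : #(Θ.verts ∪ σ.toFun '' σ.dom : Set X) < #X :=
    (mk_union_le _ _).trans_lt <|
      (add_lt_of_lt hℵ hΘ (mk_image_le.trans_lt σ.small)).trans_eq hX.symm
  obtain ⟨x, hx⟩ := compl_nonempty_of_mk_lt_mk hsmall
  rw [Set.mem_compl_iff, Set.mem_union, not_or] at hx
  obtain ⟨hxΘ, hxσ⟩ := hx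
  have hadj : ∀ b ∈ σ.dom, F.Adj v b →
      ((⊤ : SimpleGraph X) \ Θ.spanningCoe).Adj x (σ.toFun b) := fun b hb _ =>
    SimpleGraph.Subgraph.top_sdiff_spanningCoe_adj_of_notMem_verts hxΘ
      fun h => hxσ ⟨b, hb, h.symm⟩
  exact ⟨σ.extend hℵ hv hxσ hadj, σ.mk_dom_extend_le hℵ hv hxσ hadj,
    σ.le_extend hℵ hv hxσ hadj, σ.mem_dom_extend hℵ hv hxσ hadj⟩

end PartialEmb

theorem stmt_10_general {V X : Type u} (ℵ : Cardinal.{u}) (hℵ : Cardinal.aleph0 ≤ ℵ)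
    (hX : Cardinal.mk X = ℵ)
    (F : SimpleGraph V)
    (hdom : ∀ D : Set V, IsDominatingSet F D → ℵ ≤ Cardinal.mk ↥D)
    (Θ : (⊤ : SimpleGraph X).Subgraph) (hΘ : Cardinal.mk ↥Θ.verts < ℵ)
    (σ : PartialEmb ℵ F ((⊤ : SimpleGraph X) \ Θ.spanningCoe)) :
    (∀ v : V, ∃ σ' : PartialEmb ℵ F ((⊤ : SimpleGraph X) \ Θ.spanningCoe),
        Cardinal.mk ↥σ'.dom ≤ Cardinal.mk ↥σ.dom + 1 ∧ σ.le σ' ∧ v ∈ σ'.dom) ∧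
      ∀ x : X, ∃ σ'' : PartialEmb ℵ F ((⊤ : SimpleGraph X) \ Θ.spanningCoe),
        Cardinal.mk ↥σ''.dom ≤ Cardinal.mk ↥σ.dom + 1 ∧ σ.le σ'' ∧
          x ∈ σ''.toFun '' σ''.dom := by
  have hσ : ¬ IsDominatingSet F σ.dom := fun h => (hdom _ h).not_gt σ.small
  exact ⟨σ.exists_le_mem_dom_of_top_sdiff hℵ hX hΘ,
    σ.exists_le_mem_image_of_not_dominating hℵ hσ⟩

/-- let `F` be a graph of infinite order `ℵ` with no dominating set of
cardinality `< ℵ`, let `Θ` be an `ℵ`-small subgraph of the complete graph `K_ℵ`, and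
let `σ ∈ Σ_ℵ(F, K_ℵ \ Θ)`. Then (1) every vertex `v` of `F` lies in the domain of
some extension `σ'` of `σ` in `Σ_ℵ(F, K_ℵ \ Θ)` whose domain has at most one more
vertex, and (2) every vertex `x` of `K_ℵ` lies in the image of some extension `σ''`
of `σ` in `Σ_ℵ(F, K_ℵ \ Θ)` whose domain has at most one more vertex. -/
theorem stmt_10 {V X : Type u} (ℵ : Cardinal.{u}) (hℵ : Cardinal.aleph0 ≤ ℵ)
    (hV : Cardinal.mk V = ℵ) (hX : Cardinal.mk X = ℵ)
    (F : SimpleGraph V)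
    (hdom : ∀ D : Set V, IsDominatingSet F D → ℵ ≤ Cardinal.mk ↥D)
    (Θ : (⊤ : SimpleGraph X).Subgraph) (hΘ : Cardinal.mk ↥Θ.verts < ℵ)
    (σ : PartialEmb ℵ F ((⊤ : SimpleGraph X) \ Θ.spanningCoe)) :
    (∀ v : V, ∃ σ' : PartialEmb ℵ F ((⊤ : SimpleGraph X) \ Θ.spanningCoe),
        Cardinal.mk ↥σ'.dom ≤ Cardinal.mk ↥σ.dom + 1 ∧ σ.le σ' ∧ v ∈ σ'.dom) ∧
      ∀ x : X, ∃ σ'' : PartialEmb ℵ F ((⊤ : SimpleGraph X) \ Θ.spanningCoe),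
        Cardinal.mk ↥σ''.dom ≤ Cardinal.mk ↥σ.dom + 1 ∧ σ.le σ'' ∧
          x ∈ σ''.toFun '' σ''.dom :=
  stmt_10_general ℵ hℵ hX F hdom Θ hΘ σ
end

section
/- There is no factorization of the complete graph K_ℕ on a countably infinite vertex set into factors each isomorphic to the countable star S_1; that is, FP(S_1) has no solution. -/
/-- The countable star `S₁`: the graph on `ℕ` whose edges are `{0, i}` for `i ≥ 1`. -/
def Star1 : SimpleGraph ℕ :=
  SimpleGraph.fromRel (fun a b => a = 0 ∧ b ≠ 0)

/-- A set `𝒢` of graphs is a factorization of `Λ`: each member is a (spanning)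
subgraph of `Λ` and the edge sets of the members partition the edge set of `Λ`. -/
def IsFactorizationSet {V : Type*} (Λ : SimpleGraph V) (𝒢 : Set (SimpleGraph V)) : Prop :=
  (∀ Γ ∈ 𝒢, Γ ≤ Λ) ∧ ∀ e ∈ Λ.edgeSet, ∃! Γ, Γ ∈ 𝒢 ∧ e ∈ Γ.edgeSet

lemma star1_adj (a b : ℕ) : Star1.Adj a b ↔ a ≠ b ∧ (a = 0 ∨ b = 0) := by
  simp only [Star1, SimpleGraph.fromRel_adj]
  constructor
  · rintro ⟨h, ⟨rfl, _⟩ | ⟨rfl, _⟩⟩ <;> tauto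
  · rintro ⟨h, rfl | rfl⟩
    · exact ⟨h, Or.inl ⟨rfl, fun hb => h hb.symm⟩⟩
    · exact ⟨h, Or.inr ⟨rfl, fun hb => h hb⟩⟩

lemma center_of_iso {Γ : SimpleGraph ℕ} (e : Star1 ≃g Γ) :
    ∃ c : ℕ, ∀ a b, Γ.Adj a b ↔ a ≠ b ∧ (a = c ∨ b = c) := by
  refine ⟨e 0, fun a b => ?_⟩
  have h : Γ.Adj a b ↔ Star1.Adj (e.symm a) (e.symm b) := by
    conv_lhs => rw [show a = e (e.symm a) by simp, show b = e (e.symm b) by simp]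
    exact e.map_adj_iff
  rw [h, star1_adj]
  constructor
  · rintro ⟨h1, h2 | h2⟩
    · refine ⟨fun hab => h1 (by rw [hab]), Or.inl ?_⟩
      have := congrArg e h2; simpa using this
    · refine ⟨fun hab => h1 (by rw [hab]), Or.inr ?_⟩
      have := congrArg e h2; simpa using this
  · rintro ⟨h1, rfl | rfl⟩
    · exact ⟨fun h => h1 (e.symm.injective h), Or.inl (by simp)⟩
    · exact ⟨fun h => h1 (e.symm.injective h), Or.inr (by simp)⟩

/-- there is no factorization of the complete graph `K_ℕ` into
factors each isomorphic to the countable star `S₁`, i.e. `FP(S₁)` has no solution. -/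
theorem stmt_11 :
    ¬ ∃ 𝒢 : Set (SimpleGraph ℕ), IsFactorizationSet (⊤ : SimpleGraph ℕ) 𝒢 ∧
        ∀ Γ ∈ 𝒢, Nonempty (Star1 ≃g Γ) := by
  rintro ⟨𝒢, ⟨_, huniq⟩, hiso⟩
  -- star containing edge {0,1}
  obtain ⟨Γ1, ⟨hΓ1, he1⟩, -⟩ := huniq s(0, 1) (by simp)
  obtain ⟨Γ2, ⟨hΓ2, he2⟩, -⟩ := huniq s(2, 3) (by simp)
  obtain ⟨c1, hc1⟩ := center_of_iso (hiso Γ1 hΓ1).some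
  obtain ⟨c2, hc2⟩ := center_of_iso (hiso Γ2 hΓ2).some
  rw [SimpleGraph.mem_edgeSet, hc1] at he1
  rw [SimpleGraph.mem_edgeSet, hc2] at he2
  have hc1' : c1 = 0 ∨ c1 = 1 := by rcases he1.2 with h | h <;> [left; right] <;> omega
  have hc2' : c2 = 2 ∨ c2 = 3 := by rcases he2.2 with h | h <;> [left; right] <;> omega
  have hne : c1 ≠ c2 := by omega
  -- edge {c1, c2} is in both
  have hmem1 : s(c1, c2) ∈ Γ1.edgeSet := by rw [SimpleGraph.mem_edgeSet, hc1]; exact ⟨hne, Or.inl rfl⟩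
  have hmem2 : s(c1, c2) ∈ Γ2.edgeSet := by rw [SimpleGraph.mem_edgeSet, hc2]; exact ⟨hne, Or.inr rfl⟩
  obtain ⟨Γ, -, hun⟩ := huniq s(c1, c2) (by simpa using hne)
  have heq : Γ1 = Γ2 := (hun Γ1 ⟨hΓ1, hmem1⟩).trans (hun Γ2 ⟨hΓ2, hmem2⟩).symm
  have h01 : Γ2.Adj 0 1 := by rw [← heq, hc1]; exact he1
  rw [hc2] at h01
  omega
end

section
/- Let F be the vertex-disjoint union of the countable star S_1 with a finite set of isolated vertices. Then there is no factorization of the complete graph K_ℕ on a countably infinite vertex set into factors each isomorphic to F; that is, FP(F) has no solution. -/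
/-- The vertex-disjoint union of the countable star `S₁` with `m` isolated
vertices, on the vertex set `ℕ ⊕ Fin m`. -/
def StarPlusIsolated (m : ℕ) : SimpleGraph (ℕ ⊕ Fin m) :=
  Star1.map (⟨Sum.inl, Sum.inl_injective⟩ : ℕ ↪ ℕ ⊕ Fin m)

/-!
Every factor isomorphic to `F` is a star with a centre `c` whose leaves are all vertices but
at most `m`. Every edge of `K_ℕ` meets the centre of its factor, so at most one vertex is not a
centre, and there are infinitely many centres. Take `m + 1` centres `A`, and a further centre `b`
that is missed by none of the factors centred in `A`. For `a ∈ A` the edge `ab` lies in the factor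
centred at `a`, hence not in the factor `Γ` centred at `b`; so `Γ` misses all of `A`, which has
more than `m` elements.
-/

open Finset

variable {V : Type*}

/-- Only an upper bound: the centre `c` may also be adjacent to vertices of `E`. -/
structure IsStarMissing (Γ : SimpleGraph V) (c : V) (E : Finset V) : Prop where
  eq_or_eq_of_adj : ∀ ⦃x y⦄, Γ.Adj x y → x = c ∨ y = c
  adj_of_notMem : ∀ ⦃x⦄, x ≠ c → x ∉ E → Γ.Adj c x

namespace StarPlusIsolated

variable {m : ℕ}

lemma eq_center_or_eq_center_of_adj {u v : ℕ ⊕ Fin m} (h : (StarPlusIsolated m).Adj u v) :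
    u = .inl 0 ∨ v = .inl 0 := by
  obtain ⟨a, b, ⟨-, (⟨rfl, -⟩ | ⟨rfl, -⟩)⟩, rfl, rfl⟩ := (SimpleGraph.map_adj _ _ _ _).mp h <;> simp

lemma adj_center {i : ℕ} (hi : i ≠ 0) : (StarPlusIsolated m).Adj (.inl 0) (.inl i) :=
  (SimpleGraph.map_adj _ _ _ _).mpr ⟨0, i, by simp [Star1, hi, Ne.symm hi], rfl, rfl⟩

lemma exists_isStarMissing_of_iso {Γ : SimpleGraph V} (e : StarPlusIsolated m ≃g Γ) :
    ∃ c, ∃ E : Finset V, #E ≤ m ∧ IsStarMissing Γ c E := by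
  classical
  refine ⟨e (.inl 0), univ.image (fun j => e (.inr j)), card_image_le.trans (by simp), ?_, ?_⟩
  · intro x y hxy
    rcases eq_center_or_eq_center_of_adj (e.symm.map_adj_iff.mpr hxy) with h | h
    · exact .inl (e.symm_apply_eq.mp h)
    · exact .inr (e.symm_apply_eq.mp h)
  · intro x hxc hxE
    obtain ⟨i | j, rfl⟩ := e.surjective x
    · have hi : i ≠ 0 := by rintro rfl; exact hxc rfl
      exact e.map_adj_iff.mpr (adj_center hi)
    · exact absurd (mem_image_of_mem _ (mem_univ j)) hxE

end StarPlusIsolated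

namespace IsFactorizationSet

variable {Λ : SimpleGraph V} {𝒢 : Set (SimpleGraph V)}

lemma exists_mem_adj (h : IsFactorizationSet Λ 𝒢) {x y : V} (hxy : Λ.Adj x y) :
    ∃ Γ ∈ 𝒢, Γ.Adj x y :=
  (h.2 s(x, y) hxy).exists

lemma eq_of_adj (h : IsFactorizationSet Λ 𝒢) {Γ₁ Γ₂ : SimpleGraph V} (h₁ : Γ₁ ∈ 𝒢)
    (h₂ : Γ₂ ∈ 𝒢) {x y : V} (hxy₁ : Γ₁.Adj x y) (hxy₂ : Γ₂.Adj x y) : Γ₁ = Γ₂ :=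
  (h.2 s(x, y) (h.1 Γ₁ h₁ hxy₁)).unique ⟨h₁, hxy₁⟩ ⟨h₂, hxy₂⟩

lemma mem_or_mem_of_isStarMissing (h : IsFactorizationSet Λ 𝒢) {Γ₁ Γ₂ : SimpleGraph V}
    (h₁ : Γ₁ ∈ 𝒢) (h₂ : Γ₂ ∈ 𝒢) (hΓ : Γ₁ ≠ Γ₂) {c₁ c₂ : V} (hc : c₁ ≠ c₂) {E₁ E₂ : Finset V}
    (hs₁ : IsStarMissing Γ₁ c₁ E₁) (hs₂ : IsStarMissing Γ₂ c₂ E₂) : c₂ ∈ E₁ ∨ c₁ ∈ E₂ := by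
  by_contra! ⟨hc₂, hc₁⟩
  exact hΓ (h.eq_of_adj h₁ h₂ (hs₁.adj_of_notMem hc.symm hc₂) (hs₂.adj_of_notMem hc hc₁).symm)

lemma infinite_image_of_eq_or_eq_of_adj [Infinite V] (h : IsFactorizationSet ⊤ 𝒢)
    (c : SimpleGraph V → V) (hc : ∀ Γ ∈ 𝒢, ∀ ⦃x y⦄, Γ.Adj x y → x = c Γ ∨ y = c Γ) :
    (c '' 𝒢).Infinite := by
  have hcompl : (c '' 𝒢)ᶜ.Subsingleton := by
    intro v hv w hw
    by_contra hvw
    obtain ⟨Γ, hΓ, hadj⟩ := h.exists_mem_adj ((SimpleGraph.top_adj v w).mpr hvw)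
    rcases hc Γ hΓ hadj with rfl | rfl
    exacts [hv ⟨Γ, hΓ, rfl⟩, hw ⟨Γ, hΓ, rfl⟩]
  exact Set.infinite_of_finite_compl hcompl.finite

theorem false_of_isStarMissing [Infinite V] (h : IsFactorizationSet ⊤ 𝒢) {m : ℕ}
    (c : SimpleGraph V → V) (E : SimpleGraph V → Finset V) (hE : ∀ Γ ∈ 𝒢, #(E Γ) ≤ m)
    (hstar : ∀ Γ ∈ 𝒢, IsStarMissing Γ (c Γ) (E Γ)) : False := by
  classical
  have hinf := h.infinite_image_of_eq_or_eq_of_adj c fun Γ hΓ => (hstar Γ hΓ).eq_or_eq_of_adj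
  obtain ⟨A, hA, hAcard⟩ := hinf.exists_subset_card_eq (m + 1)
  choose! G hG hcG using fun a (ha : a ∈ A) => hA ha
  obtain ⟨b, ⟨Γ, hΓ, rfl⟩, hb⟩ := (hinf.sdiff (A ∪ A.biUnion (E ∘ G)).finite_toSet).nonempty
  simp only [coe_union, coe_biUnion, Set.mem_union, Set.mem_iUnion, mem_coe, not_or,
    not_exists] at hb
  have hAE : A ⊆ E Γ := by
    intro a ha
    have hne : c (G a) ≠ c Γ := fun heq => hb.1 (by rwa [← heq, hcG a ha])
    rcases h.mem_or_mem_of_isStarMissing (hG a ha) hΓ (fun hGa => hne (congrArg c hGa)) hne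
      (hstar _ (hG a ha)) (hstar Γ hΓ) with hmem | hmem
    · exact absurd hmem (hb.2 a ha)
    · rwa [hcG a ha] at hmem
  have := (card_le_card hAE).trans (hE Γ hΓ)
  omega

end IsFactorizationSet

/-- if `F` is the vertex-disjoint union of the countable star `S₁`
with a finite set of isolated vertices, then there is no factorization of the
complete graph `K_ℕ` into factors each isomorphic to `F`. -/
theorem stmt_12 (m : ℕ) :
    ¬ ∃ 𝒢 : Set (SimpleGraph ℕ), IsFactorizationSet (⊤ : SimpleGraph ℕ) 𝒢 ∧
        ∀ Γ ∈ 𝒢, Nonempty (StarPlusIsolated m ≃g Γ) := by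
  rintro ⟨𝒢, h𝒢, hiso⟩
  have hstar : ∀ Γ ∈ 𝒢, ∃ c, ∃ E : Finset ℕ, #E ≤ m ∧ IsStarMissing Γ c E :=
    fun Γ hΓ => StarPlusIsolated.exists_isStarMissing_of_iso (hiso Γ hΓ).some
  choose! c E hE hcE using hstar
  exact h𝒢.false_of_isStarMissing c E hE hcE
end
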